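/- arXiv:1711.04872 — 2 statements merged into one kernel-verified Lean document; each statement's English description precedes it below -/
import Mathlib

section
/- Let n be a positive integer and define φ : {0, 1, …, 2n−1} → {0, 1, …, n−1} by φ(j) = ⌈j/2⌉ mod n (so φ(2k−1) = φ(2k) = k for 1 ≤ k ≤ n−1 and φ(2n−1) = φ(0) = 0). For a noncrossing pair partition Q of {0, 1, …, 2n−1}, let π(Q) be the set partition of {0, 1, …, n−1} whose blocks are the connected components of the graph on {0, 1, …, n−1} with an edge {φ(a), φ(b)} for each block {a, b} of Q. Then π(Q) is a noncrossing partition of {0, 1, …, n−1}, and Q ↦ π(Q) is a bijection from the set of noncrossing pair partitions of {0, 1, …, 2n−1} onto the set of noncrossing partitions of {0, 1, …, n−1}. -/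
/-- `ℓ : ℕ → ℕ` is a (normalized) `2n`-step Dyck path: `ℓ 0 = 0`, `ℓ j = 0` for every
`j ≥ 2n` (in particular `ℓ (2n) = 0`), and consecutive values differ by exactly `1`
up to time `2n`. -/
def IsDyckPath (n : ℕ) (ℓ : ℕ → ℕ) : Prop :=
  ℓ 0 = 0 ∧ (∀ j, 2 * n ≤ j → ℓ j = 0) ∧
    ∀ k, k < 2 * n → ℓ (k + 1) = ℓ k + 1 ∨ ℓ k = ℓ (k + 1) + 1

/-- The relation `i ∼_ℓ j` for a `2n`-step Dyck path:
`i, j ≤ 2n` and `ℓ i = ℓ j = min_{min(i,j) ≤ k ≤ max(i,j)} ℓ k`. -/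
def DyckRel (n : ℕ) (ℓ : ℕ → ℕ) (i j : ℕ) : Prop :=
  i ≤ 2 * n ∧ j ≤ 2 * n ∧ ℓ i = ℓ j ∧
    ∀ k, min i j ≤ k → k ≤ max i j → ℓ i ≤ ℓ k

/-- `P` is a set partition of `{0, 1, …, n-1}`, blocks being the elements of `P`. -/
def IsPartitionOf (n : ℕ) (P : Set (Set ℕ)) : Prop :=
  (∀ B ∈ P, B.Nonempty) ∧ (∀ B ∈ P, B ⊆ Set.Iio n) ∧
    ∀ i, i < n → ∃! B, B ∈ P ∧ i ∈ B

/-- A collection of blocks is noncrossing: there are no `a < b < c < d`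
with `a, c` in one block and `b, d` in a different block. -/
def IsNoncrossing (P : Set (Set ℕ)) : Prop :=
  ∀ a b c d : ℕ, a < b → b < c → c < d →
    ∀ B ∈ P, ∀ B' ∈ P, a ∈ B → c ∈ B → b ∈ B' → d ∈ B' → B = B'

/-- `P` is a noncrossing partition of `{0, 1, …, n-1}`. -/
def IsNCPartition (n : ℕ) (P : Set (Set ℕ)) : Prop :=
  IsPartitionOf n P ∧ IsNoncrossing P

/-- `P` is a noncrossing pair partition of `{0, 1, …, n-1}`:
a noncrossing partition all of whose blocks have exactly two elements. -/
def IsNCPairPartition (n : ℕ) (P : Set (Set ℕ)) : Prop :=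
  IsNCPartition n P ∧ ∀ B ∈ P, B.ncard = 2

/-- `Φ(ℓ)`: the set partition of `{0, 1, …, n-1}` whose blocks are the equivalence
classes of `∼_ℓ` among the even indices `0, 2, …, 2n-2`, identifying `2j` with `j`. -/
def dyckEvenClasses (n : ℕ) (ℓ : ℕ → ℕ) : Set (Set ℕ) :=
  {B | ∃ j, j < n ∧ B = {i | i < n ∧ DyckRel n ℓ (2 * i) (2 * j)}}

/-- `Ψ(ℓ)`: the set partition of `{0, 1, …, n-1}` whose blocks are the equivalence
classes of `∼_ℓ` among the odd indices `1, 3, …, 2n-1`, identifying `2j+1` with `j`. -/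
def dyckOddClasses (n : ℕ) (ℓ : ℕ → ℕ) : Set (Set ℕ) :=
  {B | ∃ j, j < n ∧ B = {i | i < n ∧ DyckRel n ℓ (2 * i + 1) (2 * j + 1)}}

/-- The set partition of `{0, 1, …, 2n-1}` whose blocks are the equivalence classes of
`∼_ℓ` among the even indices `0, 2, …, 2n-2` together with the equivalence classes of
`∼_ℓ` among the odd indices `1, 3, …, 2n-1`. -/
def dyckParityClasses (n : ℕ) (ℓ : ℕ → ℕ) : Set (Set ℕ) :=
  {B | ∃ j, j < 2 * n ∧ B = {i | i < 2 * n ∧ i % 2 = j % 2 ∧ DyckRel n ℓ i j}}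

/-- The vertex `ω_n^k = exp(2πik/n)` of the regular `n`-gon. -/
noncomputable def vtx (n k : ℕ) : ℂ :=
  Complex.exp (2 * Real.pi * Complex.I * k / n)

/-- The point `exp(2πis)` of the unit circle. -/
noncomputable def circlePt (s : ℝ) : ℂ :=
  Complex.exp (2 * Real.pi * Complex.I * s)

/-- The closed polygonal set associated with a block `B ⊆ {0, …, n-1}`: the union of the
segments joining cyclically consecutive vertices `ω_n^i`, `i ∈ B` (edges join `i < j` in `B`
with no element of `B` strictly between them, together with the closing edge joining the
minimum and the maximum of `B`; a singleton contributes a single point). -/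
noncomputable def blockPolygon (n : ℕ) (B : Set ℕ) : Set ℂ :=
  ⋃ i ∈ B, ⋃ j ∈ B,
    ⋃ (_ : i ≤ j ∧ ((∀ k ∈ B, ¬(i < k ∧ k < j)) ∨ (∀ k ∈ B, i ≤ k ∧ k ≤ j))),
      segment ℝ (vtx n i) (vtx n j)

/-- The lamination `Λ_n(P) ⊆ ℂ` of a set partition `P` of `{0, …, n-1}`. -/
noncomputable def lamination (n : ℕ) (P : Set (Set ℕ)) : Set ℂ :=
  ⋃ B ∈ P, blockPolygon n B

/-- The insert move at position `k` on a `2n`-step Dyck path: insert one up-step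
followed by one down-step right after time `k`. -/
def insertMove (ℓ : ℕ → ℕ) (k : ℕ) : ℕ → ℕ :=
  fun j => if j ≤ k then ℓ j else if j = k + 1 then ℓ k + 1 else ℓ (j - 2)

/-- `m(ℓ,k)`: the first time after `k` (and at most `2n`) at which the path goes strictly
below its height at time `k`, or `2n+1` if there is no such time. -/
noncomputable def liftTime (n : ℕ) (ℓ : ℕ → ℕ) (k : ℕ) : ℕ :=
  sInf ({j | k < j ∧ j ≤ 2 * n ∧ ℓ j < ℓ k} ∪ {2 * n + 1})

/-- The lift move at position `k` on a `2n`-step Dyck path: lift up by one the part of the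
path between time `k` and time `m(ℓ,k)`. -/
noncomputable def liftMove (n : ℕ) (ℓ : ℕ → ℕ) (k : ℕ) : ℕ → ℕ :=
  fun j => if j ≤ k then ℓ j
    else if j ≤ liftTime n ℓ k then ℓ (j - 1) + 1
    else ℓ (j - 2)

/-- Apply the move `ε ∈ {insert, lift}` (`true` = insert, `false` = lift) at position `k`. -/
noncomputable def applyMove (n : ℕ) (ℓ : ℕ → ℕ) (k : ℕ) (ε : Bool) : ℕ → ℕ :=
  if ε then insertMove ℓ k else liftMove n ℓ k

/-- The halving map sending a `4n`-step Dyck path `ℓ` (with `|ℓ_{2k+2} - ℓ_{2k}| = 2`)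
to the path `(ℓ_0/2, ℓ_2/2, …, ℓ_{4n}/2)`. -/
def halveMap (ℓ : ℕ → ℕ) : ℕ → ℕ := fun j => ℓ (2 * j) / 2

/-- `φ(j) = ⌈j/2⌉ mod n`. -/
def pairPhi (n j : ℕ) : ℕ := ((j + 1) / 2) % n

/-- The edge relation on `{0, …, n-1}`: `x` and `y` are joined whenever `x = φ(a)` and
`y = φ(b)` for some block `{a, b}` of `Q`. -/
def pairRel (n : ℕ) (Q : Set (Set ℕ)) (x y : ℕ) : Prop :=
  ∃ B ∈ Q, ∃ a ∈ B, ∃ b ∈ B, pairPhi n a = x ∧ pairPhi n b = y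

/-- `π(Q)`: the set partition of `{0, …, n-1}` whose blocks are the connected components of
the graph on `{0, …, n-1}` with an edge `{φ(a), φ(b)}` for each block `{a, b}` of `Q`. -/
def pairProj (n : ℕ) (Q : Set (Set ℕ)) : Set (Set ℕ) :=
  {C | ∃ x, x < n ∧ C = {y | Relation.ReflTransGen (pairRel n Q) x y}}

/-- `A` is a lamination of the closed unit disk: a closed subset of the disk which is a union
of chords (segments with endpoints on the unit circle, possibly degenerate) whose
intersections with the open unit disk are pairwise disjoint. -/
def IsLamination (A : Set ℂ) : Prop :=
  IsClosed A ∧ A ⊆ Metric.closedBall (0 : ℂ) 1 ∧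
    ∃ C : Set (ℂ × ℂ),
      (∀ p ∈ C, ‖p.1‖ = 1 ∧ ‖p.2‖ = 1) ∧
      A = ⋃ p ∈ C, segment ℝ p.1 p.2 ∧
      ∀ p ∈ C, ∀ q ∈ C, segment ℝ p.1 p.2 ≠ segment ℝ q.1 q.2 →
        Disjoint (segment ℝ p.1 p.2 ∩ Metric.ball (0 : ℂ) 1)
          (segment ℝ q.1 q.2 ∩ Metric.ball (0 : ℂ) 1)

/-- `s ∼_f t`: `f s = f t = min_{min(s,t) ≤ r ≤ max(s,t)} f r`. -/
def simRel (f : ℝ → ℝ) (s t : ℝ) : Prop :=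
  f s = f t ∧ ∀ r, min s t ≤ r → r ≤ max s t → f s ≤ f r

/-- `L(f)`: the union of the chords `[exp(2πis), exp(2πit)]` over all `s ∼_f t`
in `[0,1]`. -/
noncomputable def brownLam (f : ℝ → ℝ) : Set ℂ :=
  ⋃ s ∈ Set.Icc (0 : ℝ) 1, ⋃ t ∈ Set.Icc (0 : ℝ) 1, ⋃ (_ : simRel f s t),
    segment ℝ (circlePt s) (circlePt t)


/-! ### Auxiliary development for Statement 10 -/

section PairProjDev

open Set

private lemma ptn_uniq {n : ℕ} {P : Set (Set ℕ)} (hP : IsPartitionOf n P)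
    {B B' : Set ℕ} {x : ℕ} (hB : B ∈ P) (hB' : B' ∈ P) (hx : x ∈ B) (hx' : x ∈ B') :
    B = B' := by
  have hxn : x < n := hP.2.1 B hB hx
  obtain ⟨C, -, hu⟩ := hP.2.2 x hxn
  rw [hu B ⟨hB, hx⟩, hu B' ⟨hB', hx'⟩]

private lemma even_card_invol (f : ℕ → ℕ) :
    ∀ S : Finset ℕ, (∀ x ∈ S, f x ∈ S ∧ f (f x) = x ∧ f x ≠ x) → S.card % 2 = 0 := by
  intro S
  induction S using Finset.strongInductionOn with
  | _ S ih =>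
    intro h
    rcases S.eq_empty_or_nonempty with rfl | ⟨x, hx⟩
    · simp
    · obtain ⟨hfx, hffx, hne⟩ := h x hx
      have hfxe : f x ∈ S.erase x := Finset.mem_erase.mpr ⟨hne, hfx⟩
      have hTsub : (S.erase x).erase (f x) ⊆ S :=
        (Finset.erase_subset _ _).trans (Finset.erase_subset _ _)
      have hxT : x ∉ (S.erase x).erase (f x) := fun hxT => by
        have := Finset.mem_erase.mp (Finset.mem_erase.mp hxT).2
        exact this.1 rfl
      have hssub : (S.erase x).erase (f x) ⊂ S := ⟨hTsub, fun hs => hxT (hs hx)⟩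
      have hcard : ((S.erase x).erase (f x)).card = S.card - 1 - 1 := by
        rw [Finset.card_erase_of_mem hfxe, Finset.card_erase_of_mem hx]
      have hTinv : ∀ y ∈ (S.erase x).erase (f x),
          f y ∈ (S.erase x).erase (f x) ∧ f (f y) = y ∧ f y ≠ y := by
        intro y hy
        obtain ⟨hy1, hy2⟩ := Finset.mem_erase.mp hy
        obtain ⟨hy3, hy4⟩ := Finset.mem_erase.mp hy2
        obtain ⟨hfy, hffy, hney⟩ := h y hy4
        refine ⟨Finset.mem_erase.mpr ⟨?_, Finset.mem_erase.mpr ⟨?_, hfy⟩⟩, hffy, hney⟩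
        · intro he; exact hy3 (hffy.symm.trans ((congrArg f he).trans hffx))
        · intro he; exact hy1 (hffy.symm.trans (congrArg f he))
      have h2 : 1 < S.card := Finset.one_lt_card.mpr ⟨x, hx, f x, hfx, fun he => hne he.symm⟩
      have := ih _ hssub hTinv
      omega

private lemma phi_lt {n : ℕ} (hn : 0 < n) (a : ℕ) : pairPhi n a < n := Nat.mod_lt _ hn

private lemma phi_two_mul {n i : ℕ} (hi : i < n) : pairPhi n (2 * i) = i := by
  have h1 : (2 * i + 1) / 2 = i := by omega
  unfold pairPhi
  rw [h1, Nat.mod_eq_of_lt hi]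

private lemma phi_odd {n j : ℕ} (h1 : 1 ≤ j) (h2 : j < n) : pairPhi n (2 * j - 1) = j := by
  have h3 : (2 * j - 1 + 1) / 2 = j := by omega
  unfold pairPhi
  rw [h3, Nat.mod_eq_of_lt h2]

private lemma phi_last {n : ℕ} (hn : 0 < n) : pairPhi n (2 * n - 1) = 0 := by
  have h3 : (2 * n - 1 + 1) / 2 = n := by omega
  unfold pairPhi
  rw [h3, Nat.mod_self]

private lemma point_cases {n a x : ℕ} (hn : 0 < n) (ha : a < 2 * n) (hx : pairPhi n a = x) :
    (x < n ∧ a = 2 * x) ∨ (1 ≤ x ∧ x < n ∧ a = 2 * x - 1) ∨ (x = 0 ∧ a = 2 * n - 1) := by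
  rcases Nat.even_or_odd a with ⟨t, ht⟩ | ⟨t, ht⟩
  · left
    have h1 : (a + 1) / 2 = t := by omega
    have h2 : t < n := by omega
    unfold pairPhi at hx
    rw [h1, Nat.mod_eq_of_lt h2] at hx
    omega
  · have h1 : (a + 1) / 2 = t + 1 := by omega
    unfold pairPhi at hx
    rw [h1] at hx
    rcases Nat.lt_or_ge (t + 1) n with h2 | h2
    · right; left
      rw [Nat.mod_eq_of_lt h2] at hx
      omega
    · right; right
      have h3 : t + 1 = n := by omega
      rw [h3, Nat.mod_self] at hx
      omega

variable {n : ℕ} {Q : Set (Set ℕ)}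

private lemma block_pair (hQ : IsNCPairPartition (2 * n) Q) {B : Set ℕ} (hB : B ∈ Q) :
    ∃ a b, a < b ∧ b < 2 * n ∧ B = {a, b} := by
  obtain ⟨u, v, huv, rfl⟩ := Set.ncard_eq_two.mp (hQ.2 _ hB)
  have hu : u < 2 * n := hQ.1.1.2.1 _ hB (by simp)
  have hv : v < 2 * n := hQ.1.1.2.1 _ hB (by simp)
  rcases Nat.lt_or_ge u v with h | h
  · exact ⟨u, v, h, hv, rfl⟩
  · exact ⟨v, u, by omega, hu, Set.pair_comm u v⟩

private lemma nest (hQ : IsNCPairPartition (2 * n) Q) {a b c d : ℕ}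
    (hab : ({a, b} : Set ℕ) ∈ Q) (h1 : a < b)
    (hcd : ({c, d} : Set ℕ) ∈ Q) (h2 : a < c) (h3 : c < b) : a < d ∧ d < b := by
  have hNC := hQ.1.2
  have hne : ({c, d} : Set ℕ) ≠ {a, b} := by
    intro he
    have : c ∈ ({a, b} : Set ℕ) := he ▸ (by simp : c ∈ ({c, d} : Set ℕ))
    simp only [Set.mem_insert_iff, Set.mem_singleton_iff] at this
    omega
  have hd1 : d ≠ a := by
    intro he
    exact hne (ptn_uniq hQ.1.1 hcd hab (show d ∈ ({c, d} : Set ℕ) by simp)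
      (show d ∈ ({a, b} : Set ℕ) by simp [he]))
  have hd2 : d ≠ b := by
    intro he
    exact hne (ptn_uniq hQ.1.1 hcd hab (show d ∈ ({c, d} : Set ℕ) by simp)
      (show d ∈ ({a, b} : Set ℕ) by simp [he]))
  rcases Nat.lt_trichotomy d a with h4 | h4 | h4
  · have := hNC d a c b h4 h2 h3 _ hcd _ hab (by simp) (by simp) (by simp) (by simp)
    exact absurd this hne
  · exact absurd h4 hd1
  · rcases Nat.lt_trichotomy d b with h5 | h5 | h5
    · exact ⟨h4, h5⟩
    · exact absurd h5 hd2
    · have := hNC a c b d h2 h3 h5 _ hab _ hcd (by simp) (by simp) (by simp) (by simp)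
      exact absurd this (fun he => hne he.symm)

private lemma partner_ex (hQ : IsNCPairPartition (2 * n) Q) {c : ℕ} (hc : c < 2 * n) :
    ∃ d, d ≠ c ∧ ({c, d} : Set ℕ) ∈ Q ∧ d < 2 * n := by
  obtain ⟨B, ⟨hB, hcB⟩, -⟩ := hQ.1.1.2.2 c hc
  obtain ⟨a, b, hab, hb2n, rfl⟩ := block_pair hQ hB
  have : c = a ∨ c = b := by simpa using hcB
  rcases this with rfl | rfl
  · exact ⟨b, by omega, hB, hb2n⟩
  · exact ⟨a, by omega, by rwa [Set.pair_comm], by omega⟩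

private lemma odd_diff (hn : 0 < n) (hQ : IsNCPairPartition (2 * n) Q) {a b : ℕ}
    (hab : ({a, b} : Set ℕ) ∈ Q) (h1 : a < b) : (b - a) % 2 = 1 := by
  classical
  set f : ℕ → ℕ := fun c =>
    if h : ∃ d, d ≠ c ∧ ({c, d} : Set ℕ) ∈ Q ∧ d < 2 * n then h.choose else 0 with hf
  have hfspec : ∀ c, c < 2 * n → f c ≠ c ∧ ({c, f c} : Set ℕ) ∈ Q ∧ f c < 2 * n := by
    intro c hc
    have h := partner_ex hQ (c := c) hc
    simp only [hf, dif_pos h]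
    exact h.choose_spec
  have hb2 : b < 2 * n := hQ.1.1.2.1 _ hab (by simp)
  have key : ∀ x ∈ Finset.Ioo a b, f x ∈ Finset.Ioo a b ∧ f (f x) = x ∧ f x ≠ x := by
    intro x hx
    rw [Finset.mem_Ioo] at hx
    obtain ⟨hne, hmem, hlt⟩ := hfspec x (by omega)
    have hin : a < f x ∧ f x < b := nest hQ hab h1 hmem hx.1 hx.2
    obtain ⟨hne', hmem', hlt'⟩ := hfspec (f x) hlt
    have heq : ({f x, f (f x)} : Set ℕ) = {x, f x} :=
      ptn_uniq hQ.1.1 hmem' hmem (show f x ∈ ({f x, f (f x)} : Set ℕ) by simp)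
        (show f x ∈ ({x, f x} : Set ℕ) by simp)
    have hmm : f (f x) ∈ ({x, f x} : Set ℕ) :=
      heq ▸ (by simp : f (f x) ∈ ({f x, f (f x)} : Set ℕ))
    simp only [Set.mem_insert_iff, Set.mem_singleton_iff] at hmm
    rcases hmm with h | h
    · exact ⟨Finset.mem_Ioo.mpr hin, h, hne⟩
    · exact absurd h hne'
  have := even_card_invol f (Finset.Ioo a b) key
  rw [Nat.card_Ioo] at this
  omega

private lemma block_shape (hn : 0 < n) (hQ : IsNCPairPartition (2 * n) Q) {B : Set ℕ}
    (hB : B ∈ Q) :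
    (∃ i j, i < j ∧ j ≤ n ∧ B = {2 * i, 2 * j - 1}) ∨
    (∃ i j, 1 ≤ i ∧ i ≤ j ∧ j < n ∧ B = {2 * i - 1, 2 * j}) := by
  obtain ⟨a, b, h1, h2, rfl⟩ := block_pair hQ hB
  have hodd := odd_diff hn hQ hB h1
  rcases Nat.even_or_odd a with ⟨t, ht⟩ | ⟨t, ht⟩
  · left
    refine ⟨t, (b + 1) / 2, by omega, by omega, ?_⟩
    have e1 : 2 * t = a := by omega
    have e2 : 2 * ((b + 1) / 2) - 1 = b := by omega
    rw [e1, e2]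
  · right
    refine ⟨t + 1, b / 2, by omega, by omega, by omega, ?_⟩
    have e1 : 2 * (t + 1) - 1 = a := by omega
    have e2 : 2 * (b / 2) = b := by omega
    rw [e1, e2]

private lemma rel_of_points {B : Set ℕ} (hB : B ∈ Q) {a b : ℕ} (ha : a ∈ B) (hb : b ∈ B) :
    pairRel n Q (pairPhi n a) (pairPhi n b) := ⟨B, hB, a, ha, b, hb, rfl, rfl⟩

private lemma rel_symm {x y : ℕ} (h : pairRel n Q x y) : pairRel n Q y x := by
  obtain ⟨B, hB, a, ha, b, hb, h1, h2⟩ := h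
  exact ⟨B, hB, b, hb, a, ha, h2, h1⟩

private lemma rel_lt (hn : 0 < n) {x y : ℕ} (h : pairRel n Q x y) : y < n := by
  obtain ⟨B, hB, a, ha, b, hb, h1, h2⟩ := h
  rw [← h2]
  exact phi_lt hn b

private lemma rel_cases (hQ : IsNCPairPartition (2 * n) Q) {x y : ℕ} (h : pairRel n Q x y) :
    x = y ∨ ∃ a b, ({a, b} : Set ℕ) ∈ Q ∧ a ≠ b ∧ a < 2 * n ∧ b < 2 * n ∧
      pairPhi n a = x ∧ pairPhi n b = y := by
  obtain ⟨B, hB, a, ha, b, hb, h1, h2⟩ := h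
  by_cases hab : a = b
  · left; rw [← h1, ← h2, hab]
  · right
    obtain ⟨u, v, huv, hv, rfl⟩ := block_pair hQ hB
    have ha' : a = u ∨ a = v := by simpa using ha
    have hb' : b = u ∨ b = v := by simpa using hb
    refine ⟨a, b, ?_, hab, by omega, by omega, h1, h2⟩
    rcases ha' with rfl | rfl <;> rcases hb' with rfl | rfl
    · exact absurd rfl hab
    · exact hB
    · rw [Set.pair_comm]; exact hB
    · exact absurd rfl hab

private lemma rtg_symm {x y : ℕ} (h : Relation.ReflTransGen (pairRel n Q) x y) :
    Relation.ReflTransGen (pairRel n Q) y x :=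
  (@Relation.ReflTransGen.stdSymm _ (pairRel n Q) ⟨fun _ _ hr => rel_symm hr⟩).symm _ _ h

private lemma rtg_closed {S : Set ℕ} (hS : ∀ x ∈ S, ∀ y, pairRel n Q x y → y ∈ S)
    {x y : ℕ} (hx : x ∈ S) (h : Relation.ReflTransGen (pairRel n Q) x y) : y ∈ S := by
  induction h with
  | refl => exact hx
  | tail _ h2 ih => exact hS _ ih _ h2

private lemma cls_eq {x y : ℕ} (h : Relation.ReflTransGen (pairRel n Q) x y) :
    {z | Relation.ReflTransGen (pairRel n Q) x z} =
      {z | Relation.ReflTransGen (pairRel n Q) y z} := by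
  ext z
  exact ⟨fun hz => (rtg_symm h).trans hz, fun hz => h.trans hz⟩

private lemma closC2 (hn : 0 < n) (hQ : IsNCPairPartition (2 * n) Q) {i j : ℕ}
    (hp : ({2 * i, 2 * j - 1} : Set ℕ) ∈ Q) (hij : i < j) (hjn : j ≤ n) :
    ∀ x ∈ {z | i < z ∧ z < j}, ∀ y, pairRel n Q x y → y ∈ {z | i < z ∧ z < j} := by
  intro x hx y hrel
  obtain ⟨hix, hxj⟩ := hx
  rcases rel_cases hQ hrel with rfl | ⟨a, b, hab, hne, ha2, hb2, hpa, hpb⟩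
  · exact ⟨hix, hxj⟩
  have hA := point_cases hn ha2 hpa
  have haint : 2 * i < a ∧ a < 2 * j - 1 := by
    rcases hA with ⟨h', rfl⟩ | ⟨h1', h2', rfl⟩ | ⟨rfl, rfl⟩ <;> omega
  have hbint : 2 * i < b ∧ b < 2 * j - 1 := nest hQ hp (by omega) hab haint.1 haint.2
  have hB := point_cases hn hb2 hpb
  rcases hB with ⟨h', rfl⟩ | ⟨h1', h2', rfl⟩ | ⟨rfl, rfl⟩ <;> exact ⟨by omega, by omega⟩

private lemma closC1 (hn : 0 < n) (hQ : IsNCPairPartition (2 * n) Q) {i j : ℕ}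
    (hp : ({2 * i - 1, 2 * j} : Set ℕ) ∈ Q) (h1 : 1 ≤ i) (h2 : i ≤ j) (h3 : j < n) :
    ∀ x ∈ {z | i ≤ z ∧ z ≤ j}, ∀ y, pairRel n Q x y → y ∈ {z | i ≤ z ∧ z ≤ j} := by
  intro x hx y hrel
  obtain ⟨hix, hxj⟩ := hx
  rcases rel_cases hQ hrel with rfl | ⟨a, b, hab, hne, ha2, hb2, hpa, hpb⟩
  · exact ⟨hix, hxj⟩
  have hA := point_cases hn ha2 hpa
  by_cases hedge : a = 2 * i - 1 ∨ a = 2 * j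
  · have hmem : ({a, b} : Set ℕ) = {2 * i - 1, 2 * j} := by
      refine ptn_uniq hQ.1.1 hab hp (show a ∈ ({a, b} : Set ℕ) by simp) ?_
      rcases hedge with rfl | rfl <;> simp
    have hbmem : b ∈ ({2 * i - 1, 2 * j} : Set ℕ) :=
      hmem ▸ (show b ∈ ({a, b} : Set ℕ) by simp)
    simp only [Set.mem_insert_iff, Set.mem_singleton_iff] at hbmem
    rcases hbmem with rfl | rfl
    · rw [phi_odd h1 (by omega)] at hpb
      exact ⟨by omega, by omega⟩
    · rw [phi_two_mul h3] at hpb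
      exact ⟨by omega, by omega⟩
  · push_neg at hedge
    have haint : 2 * i - 1 < a ∧ a < 2 * j := by
      rcases hA with ⟨h', rfl⟩ | ⟨h1', h2', rfl⟩ | ⟨rfl, rfl⟩ <;> omega
    have hbint : 2 * i - 1 < b ∧ b < 2 * j :=
      nest hQ hp (by omega) hab haint.1 haint.2
    have hB := point_cases hn hb2 hpb
    rcases hB with ⟨h', rfl⟩ | ⟨h1', h2', rfl⟩ | ⟨rfl, rfl⟩ <;> exact ⟨by omega, by omega⟩

private lemma closC3 (hn : 0 < n) (hQ : IsNCPairPartition (2 * n) Q) {i : ℕ}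
    (hp : ({2 * i, 2 * n - 1} : Set ℕ) ∈ Q) (hi : i < n) :
    ∀ x ∈ {z | z ≤ i}, ∀ y, pairRel n Q x y → y ∈ {z | z ≤ i} := by
  intro x hx y hrel
  have hx' : x ≤ i := hx
  rcases rel_cases hQ hrel with rfl | ⟨a, b, hab, hne, ha2, hb2, hpa, hpb⟩
  · exact hx
  have hA := point_cases hn ha2 hpa
  by_cases hedge : a = 2 * i ∨ a = 2 * n - 1
  · have hmem : ({a, b} : Set ℕ) = {2 * i, 2 * n - 1} := by
      refine ptn_uniq hQ.1.1 hab hp (show a ∈ ({a, b} : Set ℕ) by simp) ?_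
      rcases hedge with rfl | rfl <;> simp
    have hbmem : b ∈ ({2 * i, 2 * n - 1} : Set ℕ) :=
      hmem ▸ (show b ∈ ({a, b} : Set ℕ) by simp)
    simp only [Set.mem_insert_iff, Set.mem_singleton_iff] at hbmem
    rcases hbmem with rfl | rfl
    · rw [phi_two_mul hi] at hpb
      show y ≤ i
      omega
    · rw [phi_last hn] at hpb
      show y ≤ i
      omega
  · push_neg at hedge
    have halt : a < 2 * i := by
      rcases hA with ⟨h', rfl⟩ | ⟨h1', h2', rfl⟩ | ⟨rfl, rfl⟩ <;> omega
    have hblt : b < 2 * i := by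
      by_contra hble
      push_neg at hble
      rcases Nat.lt_or_ge b (2 * n - 1) with hb3 | hb3
      · rcases Nat.eq_or_lt_of_le hble with he | hlt
        · have hmem : ({a, b} : Set ℕ) = {2 * i, 2 * n - 1} :=
            ptn_uniq hQ.1.1 hab hp (show b ∈ ({a, b} : Set ℕ) by simp)
              (show b ∈ ({2 * i, 2 * n - 1} : Set ℕ) by simp [← he])
          have hamem : a ∈ ({2 * i, 2 * n - 1} : Set ℕ) :=
            hmem ▸ (show a ∈ ({a, b} : Set ℕ) by simp)
          simp only [Set.mem_insert_iff, Set.mem_singleton_iff] at hamem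
          omega
        · have := nest hQ hp (by omega) (Set.pair_comm a b ▸ hab) hlt hb3
          omega
      · have hbe : b = 2 * n - 1 := by omega
        have hmem : ({a, b} : Set ℕ) = {2 * i, 2 * n - 1} :=
          ptn_uniq hQ.1.1 hab hp (show b ∈ ({a, b} : Set ℕ) by simp)
            (show b ∈ ({2 * i, 2 * n - 1} : Set ℕ) by simp [hbe])
        have hamem : a ∈ ({2 * i, 2 * n - 1} : Set ℕ) :=
          hmem ▸ (show a ∈ ({a, b} : Set ℕ) by simp)
        simp only [Set.mem_insert_iff, Set.mem_singleton_iff] at hamem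
        omega
    have hB := point_cases hn hb2 hpb
    show y ≤ i
    rcases hB with ⟨h', rfl⟩ | ⟨h1', h2', rfl⟩ | ⟨rfl, rfl⟩ <;> omega

private lemma edge_interval (hn : 0 < n) (hQ : IsNCPairPartition (2 * n) Q) {x y w : ℕ}
    (hrel : pairRel n Q x y) (hxy : x < y) (hxw : x < w) (hwy : w < y)
    (hnw : ¬ Relation.ReflTransGen (pairRel n Q) x w) :
    ∀ z, Relation.ReflTransGen (pairRel n Q) w z → x < z ∧ z < y := by
  intro z hz
  rcases rel_cases hQ hrel with he | ⟨a, b, hab, hne, ha2, hb2, hpa, hpb⟩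
  · omega
  have hamem : a = 2 * 1 - 1 ∨ True := Or.inr trivial
  rcases block_shape hn hQ hab with ⟨i, j, hij, hjn, hB⟩ | ⟨i, j, h1, h2, h3, hB⟩
  · -- {a,b} = {2i, 2j-1}
    have hav : a = 2 * i ∨ a = 2 * j - 1 := by
      have := hB ▸ (show a ∈ ({a, b} : Set ℕ) by simp)
      simpa using this
    have hbv : b = 2 * i ∨ b = 2 * j - 1 := by
      have := hB ▸ (show b ∈ ({a, b} : Set ℕ) by simp)
      simpa using this
    have hilt : i < n := by omega
    have hp : ({2 * i, 2 * j - 1} : Set ℕ) ∈ Q := hB ▸ hab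
    rcases Nat.lt_or_ge j n with hjlt | hjge
    · -- j < n : labels are i and j
      have hxi : x = i ∧ y = j := by
        rcases hav with rfl | rfl <;> rcases hbv with rfl | rfl
        · omega
        · rw [phi_two_mul hilt] at hpa
          rw [phi_odd (by omega) hjlt] at hpb
          omega
        · rw [phi_odd (by omega) hjlt] at hpa
          rw [phi_two_mul hilt] at hpb
          omega
        · omega
      obtain ⟨rfl, rfl⟩ := hxi
      exact rtg_closed (closC2 hn hQ hp hij hjn)
        (show w ∈ {z | x < z ∧ z < y} from ⟨hxw, hwy⟩) hz
    · -- j = n : labels are i and 0, so x = 0, y = i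
      have hjn' : j = n := by omega
      subst hjn'
      have hxi : x = 0 ∧ y = i := by
        rcases hav with rfl | rfl <;> rcases hbv with rfl | rfl
        · omega
        · rw [phi_two_mul hilt] at hpa
          rw [phi_last hn] at hpb
          omega
        · rw [phi_last hn] at hpa
          rw [phi_two_mul hilt] at hpb
          omega
        · omega
      obtain ⟨rfl, rfl⟩ := hxi
      have hzle : z ≤ y := rtg_closed (closC3 hn hQ hp hilt)
        (show w ∈ {z | z ≤ y} by simp only [Set.mem_setOf_eq]; omega) hz
      have hz0 : z ≠ 0 := by
        rintro rfl
        exact hnw (rtg_symm hz)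
      have hzy : z ≠ y := by
        rintro rfl
        exact hnw (rtg_symm (hz.tail (rel_symm hrel)))
      omega
  · -- {a,b} = {2i-1, 2j}
    have hav : a = 2 * i - 1 ∨ a = 2 * j := by
      have := hB ▸ (show a ∈ ({a, b} : Set ℕ) by simp)
      simpa using this
    have hbv : b = 2 * i - 1 ∨ b = 2 * j := by
      have := hB ▸ (show b ∈ ({a, b} : Set ℕ) by simp)
      simpa using this
    have hp : ({2 * i - 1, 2 * j} : Set ℕ) ∈ Q := hB ▸ hab
    have hxi : x = i ∧ y = j := by
      rcases hav with rfl | rfl <;> rcases hbv with rfl | rfl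
      · omega
      · rw [phi_odd h1 (by omega)] at hpa
        rw [phi_two_mul h3] at hpb
        omega
      · rw [phi_two_mul h3] at hpa
        rw [phi_odd h1 (by omega)] at hpb
        omega
      · omega
    obtain ⟨rfl, rfl⟩ := hxi
    have hzle : x ≤ z ∧ z ≤ y := rtg_closed (closC1 hn hQ hp h1 h2 h3)
      (show w ∈ {z | x ≤ z ∧ z ≤ y} from ⟨by omega, by omega⟩) hz
    have hz0 : z ≠ x := by
      rintro rfl
      exact hnw (rtg_symm hz)
    have hzy : z ≠ y := by
      rintro rfl
      exact hnw (rtg_symm (hz.tail (rel_symm hrel)))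
    omega

private lemma straddle {x y : ℕ} (h : Relation.ReflTransGen (pairRel n Q) x y) :
    ∀ w, ¬ Relation.ReflTransGen (pairRel n Q) x w → min x y < w → w < max x y →
    ∃ u v, Relation.ReflTransGen (pairRel n Q) x u ∧
      Relation.ReflTransGen (pairRel n Q) x v ∧ pairRel n Q u v ∧ u < w ∧ w < v := by
  induction h with
  | refl => intro w _ h1 h2; omega
  | @tail z y' h1 h2 ih =>
    intro w hnw hw1 hw2
    by_cases hc : min x z < w ∧ w < max x z
    · exact ih w hnw hc.1 hc.2
    · have hwz : w ≠ z := fun he => hnw (he ▸ h1)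
      have hb : min z y' < w ∧ w < max z y' := by omega
      rcases Nat.le_total z y' with ho | ho
      · exact ⟨z, y', h1, h1.tail h2, h2, by omega, by omega⟩
      · exact ⟨y', z, h1.tail h2, h1, rel_symm h2, by omega, by omega⟩

private lemma proj_partition (hn : 0 < n) : IsPartitionOf n (pairProj n Q) := by
  refine ⟨?_, ?_, ?_⟩
  · rintro B ⟨x, hx, rfl⟩
    exact ⟨x, Relation.ReflTransGen.refl⟩
  · rintro B ⟨x, hx, rfl⟩ y hy
    simp only [Set.mem_setOf_eq] at hy
    induction hy with
    | refl => exact Set.mem_Iio.mpr hx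
    | tail _ h2 _ => exact Set.mem_Iio.mpr (rel_lt hn h2)
  · intro i hi
    refine ⟨{y | Relation.ReflTransGen (pairRel n Q) i y},
      ⟨⟨i, hi, rfl⟩, Relation.ReflTransGen.refl⟩, ?_⟩
    rintro B ⟨⟨x, hx, rfl⟩, hiB⟩
    exact cls_eq hiB

private lemma proj_noncrossing (hn : 0 < n) (hQ : IsNCPairPartition (2 * n) Q) :
    IsNoncrossing (pairProj n Q) := by
  rintro a b c d hab hbc hcd B ⟨x, hx, rfl⟩ B' ⟨x', hx', rfl⟩ ha hc hb hd
  simp only [Set.mem_setOf_eq] at ha hc hb hd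
  by_contra hne
  have hac : Relation.ReflTransGen (pairRel n Q) a c := (rtg_symm ha).trans hc
  have hbd : Relation.ReflTransGen (pairRel n Q) b d := (rtg_symm hb).trans hd
  have hnab : ¬ Relation.ReflTransGen (pairRel n Q) a b := by
    intro h
    exact hne (((cls_eq ha).trans (cls_eq h)).trans (cls_eq hb).symm)
  obtain ⟨u, v, hu, hv, huv, hub, hbv⟩ := straddle hac b hnab (by omega) (by omega)
  have hnub : ¬ Relation.ReflTransGen (pairRel n Q) u b := fun h => hnab (hu.trans h)
  have hE := edge_interval hn hQ huv (by omega) hub hbv hnub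
  have hdin := hE d hbd
  have hnbc : ¬ Relation.ReflTransGen (pairRel n Q) b c := by
    intro h
    exact hnab (rtg_symm (h.trans (rtg_symm hac)))
  obtain ⟨s, t, hs, ht, hst, hsc, hct⟩ := straddle hbd c hnbc (by omega) (by omega)
  have hsin := hE s hs
  have hnsc : ¬ Relation.ReflTransGen (pairRel n Q) s c := fun h => hnbc (hs.trans h)
  have hE2 := edge_interval hn hQ hst (by omega) hsc hct hnsc
  have hcu : Relation.ReflTransGen (pairRel n Q) c u := (rtg_symm hac).trans hu
  have := hE2 u hcu
  omega

private def lpt (n m : ℕ) : ℕ := if m = 0 then 2 * n - 1 else 2 * m - 1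

private lemma lpt_zero (n : ℕ) : lpt n 0 = 2 * n - 1 := by simp [lpt]

private lemma lpt_pos {m : ℕ} (n : ℕ) (hm : 0 < m) : lpt n m = 2 * m - 1 := by
  simp [lpt, Nat.pos_iff_ne_zero.mp hm]

private lemma lpt_lt {m : ℕ} (hn : 0 < n) (hm : m < n) : lpt n m < 2 * n := by
  rcases Nat.eq_zero_or_pos m with rfl | h
  · rw [lpt_zero]; omega
  · rw [lpt_pos _ h]; omega

private lemma lpt_odd (m : ℕ) (hn : 0 < n) : lpt n m % 2 = 1 := by
  rcases Nat.eq_zero_or_pos m with rfl | h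
  · rw [lpt_zero]; omega
  · rw [lpt_pos _ h]; omega

private lemma lpt_inj {a b : ℕ} (ha : a < n) (hb : b < n) (h : lpt n a = lpt n b) :
    a = b := by
  rcases Nat.eq_zero_or_pos a with rfl | h1 <;> rcases Nat.eq_zero_or_pos b with rfl | h2
  · rfl
  · rw [lpt_zero, lpt_pos _ h2] at h; omega
  · rw [lpt_zero, lpt_pos _ h1] at h; omega
  · rw [lpt_pos _ h1, lpt_pos _ h2] at h; omega

private lemma phi_lpt {m : ℕ} (hn : 0 < n) (hm : m < n) : pairPhi n (lpt n m) = m := by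
  rcases Nat.eq_zero_or_pos m with rfl | h
  · rw [lpt_zero]; exact phi_last hn
  · rw [lpt_pos _ h]; exact phi_odd h hm

open Classical in
private noncomputable def nextIn (B : Set ℕ) (i : ℕ) : ℕ :=
  if (B ∩ Set.Ioi i).Nonempty then sInf (B ∩ Set.Ioi i) else sInf B

open Classical in
private noncomputable def prevIn (B : Set ℕ) (m : ℕ) : ℕ :=
  if (B ∩ Set.Iio m).Nonempty then sSup (B ∩ Set.Iio m) else sSup B

private def matchOf (n : ℕ) (P : Set (Set ℕ)) : Set (Set ℕ) :=
  {A | ∃ i, i < n ∧ ∃ B ∈ P, i ∈ B ∧ A = {2 * i, lpt n (nextIn B i)}}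

private lemma nextIn_mem {B : Set ℕ} {i : ℕ} (hi : i ∈ B) : nextIn B i ∈ B := by
  unfold nextIn
  split
  · next h => exact (Nat.sInf_mem h).1
  · exact Nat.sInf_mem ⟨i, hi⟩

private lemma nextIn_eq {B : Set ℕ} {i j : ℕ} (hj : j ∈ B) (hij : i < j)
    (hmin : ∀ k ∈ B, i < k → k < j → False) : nextIn B i = j := by
  have hne : (B ∩ Set.Ioi i).Nonempty := ⟨j, hj, Set.mem_Ioi.mpr hij⟩
  unfold nextIn
  rw [if_pos hne]
  have h1 : sInf (B ∩ Set.Ioi i) ≤ j := Nat.sInf_le ⟨hj, Set.mem_Ioi.mpr hij⟩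
  have h2 := Nat.sInf_mem hne
  have h21 : sInf (B ∩ Set.Ioi i) ∈ B := h2.1
  have h22 : i < sInf (B ∩ Set.Ioi i) := h2.2
  by_contra hne2
  exact hmin _ h21 h22 (by omega)

private lemma nextIn_eq_min {B : Set ℕ} {i m : ℕ} (hmax : ∀ k ∈ B, k ≤ i)
    (hm : m ∈ B) (hmin : ∀ k ∈ B, m ≤ k) : nextIn B i = m := by
  have hne : ¬ (B ∩ Set.Ioi i).Nonempty := by
    rintro ⟨k, hk1, hk2⟩
    have := hmax k hk1
    have := Set.mem_Ioi.mp hk2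
    omega
  unfold nextIn
  rw [if_neg hne]
  have h1 : sInf B ≤ m := Nat.sInf_le hm
  have h2 : m ≤ sInf B := hmin _ (Nat.sInf_mem ⟨m, hm⟩)
  omega

private lemma nextIn_gt_or {B : Set ℕ} {i : ℕ} (hi : i ∈ B) :
    (i < nextIn B i ∧ nextIn B i ∈ B ∧ ∀ k ∈ B, i < k → k < nextIn B i → False) ∨
    ((∀ k ∈ B, k ≤ i) ∧ nextIn B i ∈ B ∧ ∀ k ∈ B, nextIn B i ≤ k) := by
  unfold nextIn
  split
  · next h =>
    left
    have h2 := Nat.sInf_mem h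
    refine ⟨Set.mem_Ioi.mp h2.2, h2.1, fun k hk h3 h4 => ?_⟩
    have := Nat.sInf_le (show k ∈ B ∩ Set.Ioi i from ⟨hk, Set.mem_Ioi.mpr h3⟩)
    omega
  · next h =>
    right
    refine ⟨fun k hk => ?_, Nat.sInf_mem ⟨i, hi⟩, fun k hk => Nat.sInf_le hk⟩
    by_contra hik
    exact h ⟨k, hk, Set.mem_Ioi.mpr (by omega)⟩

private lemma prevIn_mem {B : Set ℕ} {m N : ℕ} (hB : B ⊆ Set.Iio N) (hm : m ∈ B) :
    prevIn B m ∈ B := by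
  have hbdd : BddAbove B := ⟨N, fun x hx => le_of_lt (hB hx)⟩
  unfold prevIn
  split
  · next h => exact (Nat.sSup_mem h (hbdd.mono Set.inter_subset_left)).1
  · exact Nat.sSup_mem ⟨m, hm⟩ hbdd

private lemma prev_next {B : Set ℕ} {i N : ℕ} (hB : B ⊆ Set.Iio N) (hi : i ∈ B) :
    prevIn B (nextIn B i) = i := by
  have hbdd : BddAbove B := ⟨N, fun x hx => le_of_lt (hB hx)⟩
  rcases nextIn_gt_or hi with ⟨h1, h2, h3⟩ | ⟨h1, h2, h3⟩
  · have hne : (B ∩ Set.Iio (nextIn B i)).Nonempty := ⟨i, hi, Set.mem_Iio.mpr h1⟩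
    unfold prevIn
    rw [if_pos hne]
    have hle : i ≤ sSup (B ∩ Set.Iio (nextIn B i)) :=
      le_csSup (hbdd.mono Set.inter_subset_left) ⟨hi, Set.mem_Iio.mpr h1⟩
    have hub : sSup (B ∩ Set.Iio (nextIn B i)) ≤ i := by
      apply csSup_le hne
      rintro k ⟨hk1, hk2⟩
      by_contra hik
      exact h3 k hk1 (by omega) (Set.mem_Iio.mp hk2)
    omega
  · have hne : ¬ (B ∩ Set.Iio (nextIn B i)).Nonempty := by
      rintro ⟨k, hk1, hk2⟩
      have := h3 k hk1
      have := Set.mem_Iio.mp hk2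
      omega
    unfold prevIn
    rw [if_neg hne]
    have hle : i ≤ sSup B := le_csSup hbdd hi
    have hub : sSup B ≤ i := h1 _ (Nat.sSup_mem ⟨i, hi⟩ hbdd)
    omega

private lemma next_prev {B : Set ℕ} {m N : ℕ} (hB : B ⊆ Set.Iio N) (hm : m ∈ B) :
    nextIn B (prevIn B m) = m := by
  have hbdd : BddAbove B := ⟨N, fun x hx => le_of_lt (hB hx)⟩
  unfold prevIn
  split
  · next h =>
    have hmem := Nat.sSup_mem h (hbdd.mono Set.inter_subset_left)
    obtain ⟨hm1, hm2⟩ := hmem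
    apply nextIn_eq hm (Set.mem_Iio.mp hm2)
    intro k hk hk1 hk2
    have := le_csSup (hbdd.mono Set.inter_subset_left)
      (show k ∈ B ∩ Set.Iio m from ⟨hk, Set.mem_Iio.mpr hk2⟩)
    omega
  · next h =>
    apply nextIn_eq_min
    · intro k hk
      exact le_csSup hbdd hk
    · exact hm
    · intro k hk
      by_contra hlt
      exact h ⟨k, hk, Set.mem_Iio.mpr (by omega)⟩

private lemma matchOf_cases {P : Set (Set ℕ)} (hP : IsPartitionOf n P)
    {A : Set ℕ} (hA : A ∈ matchOf n P) :
    ∃ B ∈ P, ∃ i, i ∈ B ∧ i < n ∧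
      ((∃ j, j ∈ B ∧ i < j ∧ j < n ∧ (∀ k ∈ B, i < k → k < j → False) ∧
          A = {2 * i, 2 * j - 1}) ∨
       ((∀ k ∈ B, k ≤ i) ∧ 0 ∈ B ∧ A = {2 * i, 2 * n - 1}) ∨
       (∃ m, m ∈ B ∧ 1 ≤ m ∧ m ≤ i ∧ (∀ k ∈ B, k ≤ i) ∧ (∀ k ∈ B, m ≤ k) ∧
          A = {2 * m - 1, 2 * i})) := by
  obtain ⟨i, hi, B, hB, hiB, rfl⟩ := hA
  refine ⟨B, hB, i, hiB, hi, ?_⟩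
  rcases nextIn_gt_or hiB with ⟨h1, h2, h3⟩ | ⟨h1, h2, h3⟩
  · left
    refine ⟨nextIn B i, h2, h1, Set.mem_Iio.mp (hP.2.1 B hB h2), h3, ?_⟩
    rw [lpt_pos _ (by omega)]
  · rcases Nat.eq_zero_or_pos (nextIn B i) with he | hpos
    · right; left
      refine ⟨h1, he ▸ h2, ?_⟩
      rw [he, lpt_zero]
    · right; right
      refine ⟨nextIn B i, h2, hpos, h1 _ h2, h1, h3, ?_⟩
      rw [lpt_pos _ hpos]
      exact Set.pair_comm _ _

private lemma matchOf_partition {P : Set (Set ℕ)} (hn : 0 < n)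
    (hP : IsPartitionOf n P) : IsPartitionOf (2 * n) (matchOf n P) := by
  refine ⟨?_, ?_, ?_⟩
  · rintro A ⟨i, hi, B, hB, hiB, rfl⟩
    exact ⟨2 * i, by simp⟩
  · rintro A ⟨i, hi, B, hB, hiB, rfl⟩ p hp
    simp only [Set.mem_insert_iff, Set.mem_singleton_iff] at hp
    have hnext : nextIn B i < n := Set.mem_Iio.mp (hP.2.1 B hB (nextIn_mem hiB))
    rcases hp with rfl | rfl
    · exact Set.mem_Iio.mpr (by omega)
    · exact Set.mem_Iio.mpr (lpt_lt hn hnext)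
  · intro p hp
    rcases Nat.even_or_odd p with ⟨t, ht⟩ | ⟨t, ht⟩
    · have htn : t < n := by omega
      obtain ⟨B, ⟨hB, htB⟩, -⟩ := hP.2.2 t htn
      refine ⟨{2 * t, lpt n (nextIn B t)}, ⟨⟨t, htn, B, hB, htB, rfl⟩,
        Set.mem_insert_iff.mpr (Or.inl (by omega))⟩, ?_⟩
      rintro A' ⟨⟨i', hi', B', hB', hiB', rfl⟩, hpA'⟩
      simp only [Set.mem_insert_iff, Set.mem_singleton_iff] at hpA'
      rcases hpA' with he | he
      · have hit : i' = t := by omega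
        subst hit
        have hBB : B' = B := ptn_uniq hP hB' hB hiB' htB
        rw [hBB]
      · have := lpt_odd (n := n) (nextIn B' i') hn
        omega
    · have hp2 : p < 2 * n := hp
      have hex : ∃ m, m < n ∧ lpt n m = p := by
        rcases eq_or_ne p (2 * n - 1) with rfl | hne
        · exact ⟨0, hn, lpt_zero n⟩
        · refine ⟨t + 1, by omega, ?_⟩
          rw [lpt_pos _ (by omega)]
          omega
      obtain ⟨m, hmn, hlpt⟩ := hex
      obtain ⟨B, ⟨hB, hmB⟩, -⟩ := hP.2.2 m hmn
      have hiB : prevIn B m ∈ B := prevIn_mem (hP.2.1 B hB) hmB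
      have hnext : nextIn B (prevIn B m) = m := next_prev (hP.2.1 B hB) hmB
      have hiN : prevIn B m < n := Set.mem_Iio.mp (hP.2.1 B hB hiB)
      refine ⟨{2 * prevIn B m, lpt n (nextIn B (prevIn B m))},
        ⟨⟨prevIn B m, hiN, B, hB, hiB, rfl⟩, ?_⟩, ?_⟩
      · rw [hnext, hlpt]
        simp
      · rintro A' ⟨⟨i', hi', B', hB', hiB', rfl⟩, hpA'⟩
        simp only [Set.mem_insert_iff, Set.mem_singleton_iff] at hpA'
        rcases hpA' with he | he
        · omega
        · have hn' : nextIn B' i' < n := Set.mem_Iio.mp (hP.2.1 B' hB' (nextIn_mem hiB'))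
          have hnm : nextIn B' i' = m := lpt_inj hn' hmn (by rw [← he, hlpt])
          have hmB' : m ∈ B' := hnm ▸ nextIn_mem hiB'
          have hBB : B' = B := ptn_uniq hP hB' hB hmB' hmB
          subst hBB
          have hii : i' = prevIn B' m := by
            rw [← hnm, prev_next (hP.2.1 B' hB') hiB']
          rw [hii]
  
private lemma matchOf_pairs {P : Set (Set ℕ)} (hn : 0 < n) :
    ∀ A ∈ matchOf n P, A.ncard = 2 := by
  rintro A ⟨i, hi, B, hB, hiB, rfl⟩
  have := lpt_odd (n := n) (nextIn B i) hn
  exact Set.ncard_pair (by omega)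

private lemma matchOf_noncrossing {P : Set (Set ℕ)} (hn : 0 < n)
    (hP : IsPartitionOf n P) (hNC : IsNoncrossing P) : IsNoncrossing (matchOf n P) := by
  have hsel : ∀ u v p q : ℕ, u < v → p ∈ ({u, v} : Set ℕ) → q ∈ ({u, v} : Set ℕ) →
      p < q → p = u ∧ q = v := by
    intro u v p q huv hp hq hpq
    simp only [Set.mem_insert_iff, Set.mem_singleton_iff] at hp hq
    omega
  intro a b c d hab hbc hcd A hA A' hA' haA hcA hbA' hdA'
  exfalso
  obtain ⟨B, hB, i, hiB, hin, hcase⟩ := matchOf_cases hP hA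
  obtain ⟨B', hB', i', hiB', hin', hcase'⟩ := matchOf_cases hP hA'
  rcases hcase with ⟨j, hjB, hij, hjn, hgap, hAe⟩ | ⟨hmax, h0B, hAe⟩ |
      ⟨m, hmB, hm1, hmi, hmax, hminB, hAe⟩
  · -- A asc : a = 2i, c = 2j-1
    obtain ⟨ha, hc⟩ := hsel _ _ a c (by omega) (hAe ▸ haA) (hAe ▸ hcA) (by omega)
    subst ha; subst hc
    rcases hcase' with ⟨j', hjB', hij', hjn', hgap', hAe'⟩ | ⟨hmax', h0B', hAe'⟩ |
        ⟨m', hmB', hm1', hmi', hmax', hminB', hAe'⟩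
    · -- A' asc : b = 2i', d = 2j'-1
      obtain ⟨hb, hd⟩ := hsel _ _ b d (by omega) (hAe' ▸ hbA') (hAe' ▸ hdA') (by omega)
      subst hb; subst hd
      have hi'B : i' ∉ B := fun h => hgap i' h (by omega) (by omega)
      have heq := hNC i i' j j' (by omega) (by omega) (by omega) B hB B' hB'
        hiB hjB hiB' hjB'
      exact hi'B (heq ▸ hiB')
    · -- A' wrap : b = 2i', d = 2n-1
      obtain ⟨hb, hd⟩ := hsel _ _ b d (by omega) (hAe' ▸ hbA') (hAe' ▸ hdA') (by omega)
      subst hb; subst hd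
      have hi'B : i' ∉ B := fun h => hgap i' h (by omega) (by omega)
      rcases Nat.eq_zero_or_pos i with rfl | hipos
      · have heq : B = B' := ptn_uniq hP hB hB' hiB h0B'
        exact hi'B (heq ▸ hiB')
      · have heq := hNC 0 i i' j (by omega) (by omega) (by omega) B' hB' B hB
          h0B' hiB' hiB hjB
        exact hi'B (heq.symm ▸ hiB')
    · -- A' desc : b = 2m'-1, d = 2i'
      obtain ⟨hb, hd⟩ := hsel _ _ b d (by omega) (hAe' ▸ hbA') (hAe' ▸ hdA') (by omega)
      subst hb; subst hd
      have hm'B : m' ∉ B := fun h => hgap m' h (by omega) (by omega)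
      rcases eq_or_lt_of_le (show j ≤ i' by omega) with he | hlt
      · have heq : B = B' := ptn_uniq hP hB hB' hjB (he ▸ hiB')
        exact hm'B (heq ▸ hmB')
      · have heq := hNC i m' j i' (by omega) (by omega) hlt B hB B' hB'
          hiB hjB hmB' hiB'
        exact hm'B (heq ▸ hmB')
  · -- A wrap : a = 2i, c = 2n-1
    obtain ⟨ha, hc⟩ := hsel _ _ a c (by omega) (hAe ▸ haA) (hAe ▸ hcA) (by omega)
    subst ha; subst hc
    rcases hcase' with ⟨j', hjB', hij', hjn', hgap', hAe'⟩ | ⟨hmax', h0B', hAe'⟩ |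
        ⟨m', hmB', hm1', hmi', hmax', hminB', hAe'⟩
    · obtain ⟨hb, hd⟩ := hsel _ _ b d (by omega) (hAe' ▸ hbA') (hAe' ▸ hdA') (by omega)
      omega
    · obtain ⟨hb, hd⟩ := hsel _ _ b d (by omega) (hAe' ▸ hbA') (hAe' ▸ hdA') (by omega)
      omega
    · obtain ⟨hb, hd⟩ := hsel _ _ b d (by omega) (hAe' ▸ hbA') (hAe' ▸ hdA') (by omega)
      omega
  · -- A desc : a = 2m-1, c = 2i
    obtain ⟨ha, hc⟩ := hsel _ _ a c (by omega) (hAe ▸ haA) (hAe ▸ hcA) (by omega)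
    subst ha; subst hc
    rcases hcase' with ⟨j', hjB', hij', hjn', hgap', hAe'⟩ | ⟨hmax', h0B', hAe'⟩ |
        ⟨m', hmB', hm1', hmi', hmax', hminB', hAe'⟩
    · -- A' asc : b = 2i', d = 2j'-1
      obtain ⟨hb, hd⟩ := hsel _ _ b d (by omega) (hAe' ▸ hbA') (hAe' ▸ hdA') (by omega)
      subst hb; subst hd
      by_cases hi'B : i' ∈ B
      · have heq : B = B' := ptn_uniq hP hB hB' hi'B hiB'
        have : j' ∈ B := heq ▸ hjB'
        have := hmax j' this
        omega
      · have hmne : m < i' := by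
          rcases eq_or_lt_of_le (show m ≤ i' by omega) with he | hlt
          · exact absurd (he ▸ hmB) hi'B
          · exact hlt
        have heq := hNC m i' i j' hmne (by omega) (by omega) B hB B' hB'
          hmB hiB hiB' hjB'
        exact hi'B (heq ▸ hiB')
    · -- A' wrap : b = 2i', d = 2n-1
      obtain ⟨hb, hd⟩ := hsel _ _ b d (by omega) (hAe' ▸ hbA') (hAe' ▸ hdA') (by omega)
      subst hb; subst hd
      by_cases hi'B : i' ∈ B
      · have heq : B = B' := ptn_uniq hP hB hB' hi'B hiB'
        have : (0 : ℕ) ∈ B := heq ▸ h0B'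
        have := hminB 0 this
        omega
      · have hmne : m < i' := by
          rcases eq_or_lt_of_le (show m ≤ i' by omega) with he | hlt
          · exact absurd (he ▸ hmB) hi'B
          · exact hlt
        have heq := hNC 0 m i' i (by omega) hmne (by omega) B' hB' B hB
          h0B' hiB' hmB hiB
        exact hi'B (heq.symm ▸ hiB')
    · -- A' desc : b = 2m'-1, d = 2i'
      obtain ⟨hb, hd⟩ := hsel _ _ b d (by omega) (hAe' ▸ hbA') (hAe' ▸ hdA') (by omega)
      subst hb; subst hd
      by_cases hm'B : m' ∈ B
      · have heq : B = B' := ptn_uniq hP hB hB' hm'B hmB'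
        have : i' ∈ B := heq ▸ hiB'
        have := hmax i' this
        omega
      · have hmne : m' < i := by
          rcases eq_or_lt_of_le (show m' ≤ i by omega) with he | hlt
          · exact absurd (he ▸ hiB) hm'B
          · exact hlt
        have heq := hNC m m' i i' (by omega) hmne (by omega) B hB B' hB'
          hmB hiB hmB' hiB'
        exact hm'B (heq ▸ hmB')

private lemma proj_matchOf {P : Set (Set ℕ)} (hn : 0 < n) (hP : IsPartitionOf n P) :
    pairProj n (matchOf n P) = P := by
  have hstep : ∀ y z, pairRel n (matchOf n P) y z → ∃ B ∈ P, y ∈ B ∧ z ∈ B := by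
    rintro y z ⟨A, ⟨i, hi, B, hB, hiB, rfl⟩, p, hp, q, hq, hpy, hqz⟩
    have hnext : nextIn B i ∈ B := nextIn_mem hiB
    have hnextn : nextIn B i < n := Set.mem_Iio.mp (hP.2.1 B hB hnext)
    have hval : ∀ r ∈ ({2 * i, lpt n (nextIn B i)} : Set ℕ),
        pairPhi n r = i ∨ pairPhi n r = nextIn B i := by
      intro r hr
      simp only [Set.mem_insert_iff, Set.mem_singleton_iff] at hr
      rcases hr with rfl | rfl
      · exact Or.inl (phi_two_mul hi)
      · exact Or.inr (phi_lpt hn hnextn)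
    refine ⟨B, hB, ?_, ?_⟩
    · rcases hval p hp with h | h
      · rw [← hpy, h]; exact hiB
      · rw [← hpy, h]; exact hnext
    · rcases hval q hq with h | h
      · rw [← hqz, h]; exact hiB
      · rw [← hqz, h]; exact hnext
  have hchain : ∀ B ∈ P, ∀ v, v ∈ B → ∀ u ∈ B, u ≤ v →
      Relation.ReflTransGen (pairRel n (matchOf n P)) u v := by
    intro B hB v
    induction v using Nat.strong_induction_on with
    | _ v ih =>
      intro hv u hu huv
      rcases eq_or_lt_of_le huv with rfl | hlt
      · exact Relation.ReflTransGen.refl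
      · have hbdd : BddAbove (B ∩ Set.Iio v) := ⟨v, fun x hx => le_of_lt hx.2⟩
        have hne : (B ∩ Set.Iio v).Nonempty := ⟨u, hu, Set.mem_Iio.mpr hlt⟩
        have hwmem := Nat.sSup_mem hne hbdd
        have hwv : sSup (B ∩ Set.Iio v) < v := Set.mem_Iio.mp hwmem.2
        have huw : u ≤ sSup (B ∩ Set.Iio v) := le_csSup hbdd ⟨hu, Set.mem_Iio.mpr hlt⟩
        have hnext : nextIn B (sSup (B ∩ Set.Iio v)) = v := by
          apply nextIn_eq hv hwv
          intro k hk h1 h2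
          have := le_csSup hbdd (show k ∈ B ∩ Set.Iio v from ⟨hk, Set.mem_Iio.mpr h2⟩)
          omega
        have hwn : sSup (B ∩ Set.Iio v) < n := Set.mem_Iio.mp (hP.2.1 B hB hwmem.1)
        have hvn : v < n := Set.mem_Iio.mp (hP.2.1 B hB hv)
        have hrel : pairRel n (matchOf n P) (sSup (B ∩ Set.Iio v)) v := by
          refine ⟨{2 * sSup (B ∩ Set.Iio v), lpt n (nextIn B (sSup (B ∩ Set.Iio v)))},
            ⟨sSup (B ∩ Set.Iio v), hwn, B, hB, hwmem.1, rfl⟩,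
            2 * sSup (B ∩ Set.Iio v), by simp,
            lpt n (nextIn B (sSup (B ∩ Set.Iio v))), by simp,
            phi_two_mul hwn, ?_⟩
          rw [hnext]
          exact phi_lpt hn hvn
        exact (ih _ hwv hwmem.1 u hu huw).tail hrel
  have hkey : ∀ B ∈ P, ∀ x, x ∈ B →
      {y | Relation.ReflTransGen (pairRel n (matchOf n P)) x y} = B := by
    intro B hB x hxB
    ext y
    simp only [Set.mem_setOf_eq]
    constructor
    · intro h
      induction h with
      | refl => exact hxB
      | tail h1 h2 ih =>
        obtain ⟨B2, hB2, hyB2, hzB2⟩ := hstep _ _ h2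
        rwa [ptn_uniq hP hB2 hB hyB2 ih] at hzB2
    · intro hyB
      rcases Nat.le_total x y with h | h
      · exact hchain B hB y hyB x hxB h
      · exact rtg_symm (hchain B hB x hxB y hyB h)
  ext C
  constructor
  · rintro ⟨x, hx, rfl⟩
    obtain ⟨B, ⟨hB, hxB⟩, -⟩ := hP.2.2 x hx
    rw [hkey B hB x hxB]
    exact hB
  · intro hC
    obtain ⟨x, hxC⟩ := hP.1 C hC
    exact ⟨x, Set.mem_Iio.mp (hP.2.1 C hC hxC), (hkey C hC x hxC).symm⟩

private lemma reconstruct (hn : 0 < n) (hQ : IsNCPairPartition (2 * n) Q)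
    {p : Set ℕ} (hp : p ∈ Q) {i : ℕ} (hi : 2 * i ∈ p) :
    i < n ∧ p = {2 * i, lpt n (nextIn {y | Relation.ReflTransGen (pairRel n Q) i y} i)} := by
  set B := {y | Relation.ReflTransGen (pairRel n Q) i y} with hBdef
  have hiB : i ∈ B := Relation.ReflTransGen.refl
  have hin : i < n := by
    have := hQ.1.1.2.1 p hp hi
    simp only [Set.mem_Iio] at this
    omega
  have hBlt : ∀ k ∈ B, k < n := fun k hk =>
    Set.mem_Iio.mp (rtg_closed (S := Set.Iio n)
      (fun x _ y hy => Set.mem_Iio.mpr (rel_lt hn hy)) (Set.mem_Iio.mpr hin) hk)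
  rcases block_shape hn hQ hp with ⟨u, v, huv, hvn, hpe⟩ | ⟨u, v, hu1, huv, hvn, hpe⟩
  · have hmem2 : 2 * i = 2 * u ∨ 2 * i = 2 * v - 1 := by
      have := hpe ▸ hi
      simpa using this
    have hiu : i = u := by omega
    subst hiu
    rcases Nat.lt_or_ge v n with hv | hv
    · -- v < n
      have hrel : pairRel n Q i v := by
        have := rel_of_points (n := n) hp hi (show 2 * v - 1 ∈ p by rw [hpe]; simp)
        rwa [phi_two_mul hin, phi_odd (by omega) hv] at this
      have hvB : v ∈ B := Relation.ReflTransGen.single hrel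
      have hnext : nextIn B i = v := by
        apply nextIn_eq hvB huv
        intro k hk h1 h2
        have hcl := rtg_closed (closC2 hn hQ (hpe ▸ hp) huv (le_of_lt hv))
          (show k ∈ {z | i < z ∧ z < v} from ⟨h1, h2⟩) (rtg_symm hk)
        exact absurd hcl.1 (lt_irrefl i)
      refine ⟨hin, ?_⟩
      rw [hnext, lpt_pos _ (by omega)]
      exact hpe
    · -- v = n
      have hvn' : v = n := by omega
      rw [hvn'] at hpe huv
      have hrel : pairRel n Q i 0 := by
        have := rel_of_points (n := n) hp hi (show 2 * n - 1 ∈ p by rw [hpe]; simp)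
        rwa [phi_two_mul hin, phi_last hn] at this
      have h0B : (0 : ℕ) ∈ B := Relation.ReflTransGen.single hrel
      have hmax : ∀ k ∈ B, k ≤ i := by
        intro k hk
        by_contra hik
        have hcl := rtg_closed (closC2 hn hQ (hpe ▸ hp) huv le_rfl)
          (show k ∈ {z | i < z ∧ z < n} from ⟨by omega, hBlt k hk⟩) (rtg_symm hk)
        exact absurd hcl.1 (lt_irrefl i)
      have hnext : nextIn B i = 0 := nextIn_eq_min hmax h0B (fun k _ => Nat.zero_le k)
      refine ⟨hin, ?_⟩
      rw [hnext, lpt_zero]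
      exact hpe
  · -- p = {2u-1, 2v}
    have hmem2 : 2 * i = 2 * u - 1 ∨ 2 * i = 2 * v := by
      have := hpe ▸ hi
      simpa using this
    have hiv : i = v := by omega
    subst hiv
    have hrel : pairRel n Q i u := by
      have := rel_of_points (n := n) hp hi (show 2 * u - 1 ∈ p by rw [hpe]; simp)
      rwa [phi_two_mul hin, phi_odd hu1 (by omega)] at this
    have huB : u ∈ B := Relation.ReflTransGen.single hrel
    have hIcc : ∀ k ∈ B, u ≤ k ∧ k ≤ i := fun k hk =>
      rtg_closed (closC1 hn hQ (hpe ▸ hp) hu1 huv hvn)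
        (show i ∈ {z | u ≤ z ∧ z ≤ i} from ⟨huv, le_rfl⟩) hk
    have hnext : nextIn B i = u :=
      nextIn_eq_min (fun k hk => (hIcc k hk).2) huB (fun k hk => (hIcc k hk).1)
    refine ⟨hin, ?_⟩
    rw [hnext, lpt_pos _ hu1, hpe]
    exact Set.pair_comm _ _

private lemma matchOf_proj (hn : 0 < n) (hQ : IsNCPairPartition (2 * n) Q) :
    matchOf n (pairProj n Q) = Q := by
  ext A
  constructor
  · rintro ⟨i, hi, B, hB, hiB, rfl⟩
    obtain ⟨x, hx, rfl⟩ := hB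
    have hBi : {y | Relation.ReflTransGen (pairRel n Q) x y} =
        {y | Relation.ReflTransGen (pairRel n Q) i y} := cls_eq hiB
    obtain ⟨p, ⟨hp, hpmem⟩, -⟩ := hQ.1.1.2.2 (2 * i) (by omega)
    obtain ⟨-, hpe⟩ := reconstruct hn hQ hp hpmem
    rw [hBi, ← hpe]
    exact hp
  · intro hA
    obtain ⟨a, b, h1, h2, hAe⟩ := block_pair hQ hA
    have hodd := odd_diff hn hQ (hAe ▸ hA) h1
    rcases Nat.even_or_odd a with ⟨t, ht⟩ | ⟨t, ht⟩
    · have hmem : 2 * t ∈ A := by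
        rw [hAe]
        simp only [Set.mem_insert_iff, Set.mem_singleton_iff]
        omega
      obtain ⟨htn, hpe⟩ := reconstruct hn hQ hA hmem
      exact ⟨t, htn, {y | Relation.ReflTransGen (pairRel n Q) t y}, ⟨t, htn, rfl⟩,
        Relation.ReflTransGen.refl, hpe⟩
    · have hmem : 2 * (b / 2) ∈ A := by
        rw [hAe]
        simp only [Set.mem_insert_iff, Set.mem_singleton_iff]
        omega
      obtain ⟨htn, hpe⟩ := reconstruct hn hQ hA hmem
      exact ⟨b / 2, htn, {y | Relation.ReflTransGen (pairRel n Q) (b / 2) y},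
        ⟨b / 2, htn, rfl⟩, Relation.ReflTransGen.refl, hpe⟩

end PairProjDev

/-- For every noncrossing pair partition `Q` of `{0, …, 2n-1}`, the
partition `π(Q)` of `{0, …, n-1}` (connected components of the graph with an edge
`{φ(a), φ(b)}` for each block `{a, b}` of `Q`, where `φ(j) = ⌈j/2⌉ mod n`) is a noncrossing
partition, and `Q ↦ π(Q)` is a bijection from noncrossing pair partitions of `{0, …, 2n-1}`
onto noncrossing partitions of `{0, …, n-1}`. -/
theorem pairProj_bijOn (n : ℕ) (hn : 0 < n) :
    (∀ Q : Set (Set ℕ), IsNCPairPartition (2 * n) Q → IsNCPartition n (pairProj n Q)) ∧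
    Set.BijOn (pairProj n) {Q | IsNCPairPartition (2 * n) Q} {P | IsNCPartition n P} := by
  have hmain : ∀ Q : Set (Set ℕ), IsNCPairPartition (2 * n) Q → IsNCPartition n (pairProj n Q) :=
    fun Q hQ => ⟨proj_partition hn, proj_noncrossing hn hQ⟩
  refine ⟨hmain, fun Q hQ => hmain Q hQ, ?_, ?_⟩
  · intro Q1 h1 Q2 h2 heq
    have e1 := matchOf_proj hn h1
    have e2 := matchOf_proj hn h2
    rw [← e1, ← e2, heq]
  · intro P hP
    have h1 : IsNCPairPartition (2 * n) (matchOf n P) :=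
      ⟨⟨matchOf_partition hn hP.1, matchOf_noncrossing hn hP.1 hP.2⟩, matchOf_pairs hn⟩
    exact ⟨matchOf n P, h1, proj_matchOf hn hP.1⟩
end

section
/- For every positive integer n and every (2n+2)-step Dyck path D, the number of triples (ℓ, k, ε), where ℓ is a 2n-step Dyck path, k ∈ {0, 1, …, 2n}, and ε ∈ {insert, lift}, such that applying the move ε at position k to ℓ yields D, is exactly n + 2. -/
namespace NMP

noncomputable def mret (D : ℕ → ℕ) (k : ℕ) : ℕ := sInf {j | k < j ∧ D j ≤ D k}

def lIns (D : ℕ → ℕ) (k : ℕ) : ℕ → ℕ := fun j => if j ≤ k then D j else D (j + 2)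

noncomputable def lLift (D : ℕ → ℕ) (k : ℕ) : ℕ → ℕ :=
  fun j => if j ≤ k then D j else if j + 2 ≤ mret D k then D (j + 1) - 1 else D (j + 2)

/-- context: `D` is a `2n+2`-step Dyck path (unfolded). -/
def Ctx (n : ℕ) (D : ℕ → ℕ) : Prop :=
  D 0 = 0 ∧ (∀ j, 2*n+2 ≤ j → D j = 0) ∧
    ∀ k, k < 2*n+2 → D (k+1) = D k + 1 ∨ D k = D (k+1) + 1

theorem ctx_top {n : ℕ} {D : ℕ → ℕ} (hC : Ctx n D) : D (2*n+1) = 1 := by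
  have h2 : D (2*n+1+1) = 0 := hC.2.1 _ (by omega)
  rcases hC.2.2 (2*n+1) (by omega) with h1 | h1 <;> omega

theorem mret_mem {n : ℕ} {D : ℕ → ℕ} (hC : Ctx n D) {k : ℕ} (hk : k ≤ 2*n+1) :
    k < mret D k ∧ D (mret D k) ≤ D k := by
  have hmem : (2*n+2) ∈ {j | k < j ∧ D j ≤ D k} :=
    ⟨by omega, by rw [hC.2.1 _ le_rfl]; omega⟩
  exact Nat.sInf_mem ⟨_, hmem⟩

theorem mret_le {n : ℕ} {D : ℕ → ℕ} (hC : Ctx n D) {k : ℕ} (hk : k ≤ 2*n+1) :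
    mret D k ≤ 2*n+2 :=
  Nat.sInf_le ⟨by omega, by rw [hC.2.1 _ le_rfl]; omega⟩

theorem mret_min {D : ℕ → ℕ} {k j : ℕ} (h1 : k < j) (h2 : j < mret D k) :
    D k < D j := by
  by_contra h
  have : mret D k ≤ j := Nat.sInf_le ⟨h1, by omega⟩
  omega

theorem mret_ge {n : ℕ} {D : ℕ → ℕ} (hC : Ctx n D) {k : ℕ} (hk : k ≤ 2*n)
    (hup : D (k+1) = D k + 1) : k + 2 ≤ mret D k := by
  have h := mret_mem hC (k := k) (by omega)
  rcases Nat.lt_or_ge (mret D k) (k+2) with h2 | h2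
  · have : mret D k = k + 1 := by omega
    rw [this] at h; omega
  · exact h2

theorem mret_eq {n : ℕ} {D : ℕ → ℕ} (hC : Ctx n D) {k : ℕ} (hk : k ≤ 2*n)
    (hup : D (k+1) = D k + 1) :
    D (mret D k) = D k ∧ D (mret D k - 1) = D k + 1 := by
  have hg := mret_ge hC hk hup
  have hle := mret_le hC (k := k) (by omega)
  have hmem := mret_mem hC (k := k) (by omega)
  have hprev : D k < D (mret D k - 1) := mret_min (by omega) (by omega)
  have hstep := hC.2.2 (mret D k - 1) (by omega)
  have : mret D k - 1 + 1 = mret D k := by omega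
  rw [this] at hstep
  omega


def InsOK (n : ℕ) (D : ℕ → ℕ) (k : ℕ) : Prop :=
  k ≤ 2*n ∧ D (k+1) = D k + 1 ∧ D (k+2) = D k

theorem lIns_le {D : ℕ → ℕ} {k j : ℕ} (h : j ≤ k) : lIns D k j = D j := if_pos h

theorem lIns_gt {D : ℕ → ℕ} {k j : ℕ} (h : k < j) : lIns D k j = D (j + 2) :=
  if_neg (by omega)

theorem lIns_isDyck {n : ℕ} {D : ℕ → ℕ} {k : ℕ} (hC : Ctx n D) (h : InsOK n D k) :
    IsDyckPath n (lIns D k) := by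
  obtain ⟨hk, hup, hpk⟩ := h
  refine ⟨by rw [lIns_le (Nat.zero_le k), hC.1], ?_, ?_⟩
  · intro j hj
    by_cases hjk : j ≤ k
    · have hjk' : j = k := by omega
      subst hjk'
      rw [lIns_le le_rfl]
      have h2 := hC.2.1 (j+2) (by omega)
      omega
    · rw [lIns_gt (by omega)]
      exact hC.2.1 _ (by omega)
  · intro j hj
    by_cases h1 : j + 1 ≤ k
    · rw [lIns_le h1, lIns_le (by omega)]
      exact hC.2.2 j (by omega)
    · by_cases h2 : j ≤ k
      · have hjk' : j = k := by omega
        subst hjk'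
        rw [lIns_le le_rfl, lIns_gt (by omega)]
        have h3 := hC.2.2 (j+2) (by omega)
        rw [show j+1+2 = j+2+1 by omega]
        omega
      · rw [lIns_gt (by omega), lIns_gt (by omega)]
        have h3 := hC.2.2 (j+2) (by omega)
        rw [show j+1+2 = j+2+1 by omega]
        exact h3

theorem insertMove_lIns {n : ℕ} {D : ℕ → ℕ} {k : ℕ} (hC : Ctx n D) (h : InsOK n D k) :
    insertMove (lIns D k) k = D := by
  obtain ⟨hk, hup, hpk⟩ := h
  funext j
  unfold insertMove
  by_cases h1 : j ≤ k
  · rw [if_pos h1, lIns_le h1]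
  · rw [if_neg h1]
    by_cases h2 : j = k + 1
    · rw [if_pos h2, lIns_le le_rfl, h2, hup]
    · rw [if_neg h2]
      by_cases h3 : j - 2 ≤ k
      · have hj : j = k + 2 := by omega
        rw [hj, show k+2-2 = k by omega, lIns_le le_rfl, hpk]
      · rw [lIns_gt (by omega), show j-2+2 = j by omega]

theorem ins_v1 {ℓ : ℕ → ℕ} {k j : ℕ} (h : j ≤ k) : insertMove ℓ k j = ℓ j := if_pos h

theorem ins_v2 {ℓ : ℕ → ℕ} {k : ℕ} : insertMove ℓ k (k+1) = ℓ k + 1 := by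
  unfold insertMove; rw [if_neg (by omega), if_pos rfl]

theorem ins_v3 {ℓ : ℕ → ℕ} {k j : ℕ} (h : k + 2 ≤ j) : insertMove ℓ k j = ℓ (j - 2) := by
  unfold insertMove; rw [if_neg (by omega), if_neg (by omega)]

theorem insert_inv {n : ℕ} {D ℓ : ℕ → ℕ} {k : ℕ} (hk : k ≤ 2*n)
    (hmove : insertMove ℓ k = D) : InsOK n D k ∧ ℓ = lIns D k := by
  have hv : ∀ j, insertMove ℓ k j = D j := fun j => congrFun hmove j
  have e0 : D k = ℓ k := by have := hv k; rw [ins_v1 le_rfl] at this; omega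
  have e1 : D (k+1) = ℓ k + 1 := by have := hv (k+1); rw [ins_v2] at this; omega
  have e2 : D (k+2) = ℓ k := by
    have := hv (k+2); rw [ins_v3 le_rfl, show k+2-2 = k by omega] at this; omega
  refine ⟨⟨hk, by omega, by omega⟩, ?_⟩
  funext j
  by_cases h1 : j ≤ k
  · rw [lIns_le h1]
    have := hv j; rw [ins_v1 h1] at this; exact this
  · rw [lIns_gt (by omega)]
    have := hv (j+2); rw [ins_v3 (by omega), show j+2-2 = j by omega] at this
    exact this


def LiftOK (n : ℕ) (D : ℕ → ℕ) (k : ℕ) : Prop :=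
  k ≤ 2*n ∧ D (k+1) = D k + 1 ∧
    (mret D k = 2*n+2 ∨ D (mret D k + 1) + 1 = D (mret D k))


theorem lLift_le {D : ℕ → ℕ} {k j : ℕ} (h : j ≤ k) : lLift D k j = D j := if_pos h

theorem lLift_mid {D : ℕ → ℕ} {k j : ℕ} (h1 : k < j) (h2 : j + 2 ≤ mret D k) :
    lLift D k j = D (j + 1) - 1 := by
  unfold lLift; rw [if_neg (by omega), if_pos h2]

theorem lLift_hi {D : ℕ → ℕ} {k j : ℕ} (h1 : k < j) (h2 : mret D k < j + 2) :
    lLift D k j = D (j + 2) := by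
  unfold lLift; rw [if_neg (by omega), if_neg (by omega)]

theorem lm_v1 {n : ℕ} {ℓ : ℕ → ℕ} {k j : ℕ} (h : j ≤ k) : liftMove n ℓ k j = ℓ j :=
  if_pos h

theorem lm_v2 {n : ℕ} {ℓ : ℕ → ℕ} {k j : ℕ} (h1 : k < j) (h2 : j ≤ liftTime n ℓ k) :
    liftMove n ℓ k j = ℓ (j - 1) + 1 := by
  unfold liftMove; rw [if_neg (by omega), if_pos h2]

theorem lm_v3 {n : ℕ} {ℓ : ℕ → ℕ} {k j : ℕ} (h1 : k < j) (h2 : liftTime n ℓ k < j) :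
    liftMove n ℓ k j = ℓ (j - 2) := by
  unfold liftMove; rw [if_neg (by omega), if_neg (by omega)]

theorem lLift_isDyck {n : ℕ} {D : ℕ → ℕ} {k : ℕ} (hC : Ctx n D) (h : LiftOK n D k) :
    IsDyckPath n (lLift D k) := by
  obtain ⟨hk, hup, hok⟩ := h
  have hg : k + 2 ≤ mret D k := mret_ge hC hk hup
  have hle : mret D k ≤ 2*n+2 := mret_le hC (by omega)
  have heq := mret_eq hC hk hup
  refine ⟨by rw [lLift_le (Nat.zero_le k), hC.1], ?_, ?_⟩
  · intro j hj
    by_cases h1 : j ≤ k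
    · have hj2 : j = k := by omega
      subst hj2
      rw [lLift_le le_rfl]
      have htop := ctx_top hC
      have hj3 : j = 2*n := by omega
      subst hj3
      omega
    · by_cases h2 : j + 2 ≤ mret D k
      · -- then j ≤ 2n and j ≥ 2n so j = 2n, j+1 = 2n+1
        have hj' : j = 2*n := by omega
        rw [lLift_mid (by omega) h2, hj']
        have htop := ctx_top hC
        omega
      · rw [lLift_hi (by omega) (by omega)]
        exact hC.2.1 _ (by omega)
  · intro j hj
    by_cases h1 : j + 1 ≤ k
    · rw [lLift_le h1, lLift_le (by omega)]
      exact hC.2.2 j (by omega)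
    · by_cases h2 : j ≤ k
      · -- j = k
        have hjk : j = k := by omega
        subst hjk
        rw [lLift_le le_rfl]
        by_cases h3 : j + 3 ≤ mret D j
        · rw [lLift_mid (by omega) (by omega)]
          have hs := hC.2.2 (j+1) (by omega)
          have hm := mret_min (D := D) (k := j) (j := j+1+1) (by omega) (by omega)
          omega
        · -- mret D j = j + 2
          have hM : mret D j = j + 2 := by omega
          rw [lLift_hi (by omega) (by omega)]
          have hs := hC.2.2 (j+2) (by omega)
          have hDj2 : D (j+2) = D j := by rw [← hM]; exact heq.1
          rw [show j+1+2 = j+2+1 by omega]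
          omega
      · -- k < j
        by_cases h3 : j + 2 ≤ mret D k
        · by_cases h4 : j + 3 ≤ mret D k
          · rw [lLift_mid (by omega) h3, lLift_mid (by omega) (by omega)]
            have hs := hC.2.2 (j+1) (by omega)
            have hm1 := mret_min (D := D) (k := k) (j := j+1) (by omega) (by omega)
            have hm2 := mret_min (D := D) (k := k) (j := j+1+1) (by omega) (by omega)
            omega
          · -- mret D k = j + 2
            have hM : mret D k = j + 2 := by omega
            rw [lLift_mid (by omega) h3, lLift_hi (by omega) (by omega)]
            have hMne : mret D k ≠ 2*n+2 := by omega
            have hnext : D (mret D k + 1) + 1 = D (mret D k) := hok.resolve_left hMne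
            have hDj1 : D (j+1) = D k + 1 := by
              have := heq.2; rw [hM] at this
              rw [show j+2-1 = j+1 by omega] at this; exact this
            have hDj2 : D (j+2) = D k := by rw [← hM]; exact heq.1
            rw [hM] at hnext
            rw [show j+1+2 = j+2+1 by omega]
            omega
        · rw [lLift_hi (by omega) (by omega), lLift_hi (by omega) (by omega)]
          have hs := hC.2.2 (j+2) (by omega)
          rw [show j+1+2 = j+2+1 by omega]
          exact hs

theorem liftTime_lLift {n : ℕ} {D : ℕ → ℕ} {k : ℕ} (hC : Ctx n D) (h : LiftOK n D k) :
    liftTime n (lLift D k) k = mret D k - 1 := by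
  obtain ⟨hk, hup, hok⟩ := h
  have hg : k + 2 ≤ mret D k := mret_ge hC hk hup
  have hle : mret D k ≤ 2*n+2 := mret_le hC (by omega)
  have heq := mret_eq hC hk hup
  have hbig : ∀ j, k < j → j + 2 ≤ mret D k → lLift D k k ≤ lLift D k j := by
    intro j h1 h2
    rw [lLift_le le_rfl, lLift_mid h1 h2]
    have := mret_min (D := D) (k := k) (j := j+1) (by omega) (by omega)
    omega
  rcases Nat.lt_or_ge (mret D k) (2*n+2) with hcase | hcase
  · -- mret ≤ 2n+1 : liftTime = mret - 1
    have hMne : mret D k ≠ 2*n+2 := by omega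
    have hnext : D (mret D k + 1) + 1 = D (mret D k) := hok.resolve_left hMne
    have hvm : lLift D k (mret D k - 1) < lLift D k k := by
      rw [lLift_le le_rfl, lLift_hi (show k < mret D k - 1 by omega) (by omega),
        show mret D k - 1 + 2 = mret D k + 1 by omega]
      omega
    have hmem : (mret D k - 1) ∈
        ({j | k < j ∧ j ≤ 2 * n ∧ lLift D k j < lLift D k k} ∪ {2 * n + 1}) :=
      Or.inl ⟨by omega, by omega, hvm⟩
    have ht1 : liftTime n (lLift D k) k ≤ mret D k - 1 := Nat.sInf_le hmem
    have ht2 : liftTime n (lLift D k) k ∈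
        ({j | k < j ∧ j ≤ 2 * n ∧ lLift D k j < lLift D k k} ∪ {2 * n + 1}) :=
      Nat.sInf_mem ⟨_, hmem⟩
    rcases ht2 with ⟨h1, h2, h3⟩ | h4
    · by_contra hne
      have := hbig (liftTime n (lLift D k) k) h1 (by omega)
      omega
    · have h5 : liftTime n (lLift D k) k = 2*n+1 := h4
      omega
  · -- mret = 2n+2 : liftTime = 2n+1
    have hM : mret D k = 2*n+2 := by omega
    have hmem : (2*n+1) ∈
        ({j | k < j ∧ j ≤ 2 * n ∧ lLift D k j < lLift D k k} ∪ {2 * n + 1}) :=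
      Or.inr rfl
    have ht1 : liftTime n (lLift D k) k ≤ 2*n+1 := Nat.sInf_le hmem
    have ht2 : liftTime n (lLift D k) k ∈
        ({j | k < j ∧ j ≤ 2 * n ∧ lLift D k j < lLift D k k} ∪ {2 * n + 1}) :=
      Nat.sInf_mem ⟨_, hmem⟩
    rcases ht2 with ⟨h1, h2, h3⟩ | h4
    · have := hbig (liftTime n (lLift D k) k) h1 (by omega)
      omega
    · have h5 : liftTime n (lLift D k) k = 2*n+1 := h4
      omega

theorem liftMove_lLift {n : ℕ} {D : ℕ → ℕ} {k : ℕ} (hC : Ctx n D) (h : LiftOK n D k) :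
    liftMove n (lLift D k) k = D := by
  obtain ⟨hk, hup, hok⟩ := h
  have hg : k + 2 ≤ mret D k := mret_ge hC hk hup
  have hle : mret D k ≤ 2*n+2 := mret_le hC (by omega)
  have heq := mret_eq hC hk hup
  have hlt : liftTime n (lLift D k) k = mret D k - 1 := liftTime_lLift hC ⟨hk, hup, hok⟩
  funext j
  by_cases h1 : j ≤ k
  · rw [lm_v1 h1]; exact lLift_le h1
  · by_cases h2 : j ≤ mret D k - 1
    · rw [lm_v2 (by omega) (by rw [hlt]; omega)]
      obtain ⟨i, rfl⟩ : ∃ i, j = i + 1 := ⟨j - 1, by omega⟩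
      rw [show i + 1 - 1 = i by omega]
      by_cases h3 : i ≤ k
      · have : i = k := by omega
        subst this
        rw [lLift_le le_rfl]; omega
      · rw [lLift_mid (by omega) (by omega)]
        have := mret_min (D := D) (k := k) (j := i+1) (by omega) (by omega)
        omega
    · rw [lm_v3 (by omega) (by rw [hlt]; omega)]
      obtain ⟨i, rfl⟩ : ∃ i, j = i + 2 := ⟨j - 2, by omega⟩
      rw [show i + 2 - 2 = i by omega]
      by_cases h3 : i ≤ k
      · have hik : i = k := by omega
        subst hik
        have hM : mret D i = i + 2 := by omega
        rw [lLift_le le_rfl, ← hM, heq.1]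
      · by_cases h4 : i + 2 ≤ mret D k
        · -- i + 2 = mret D k
          have hM : mret D k = i + 2 := by omega
          rw [lLift_mid (by omega) h4]
          have := heq.2
          rw [hM, show i+2-1 = i+1 by omega] at this
          rw [this, show D k + 1 - 1 = D k from by omega, ← hM, heq.1]
        · rw [lLift_hi (by omega) (by omega)]

theorem lift_inv {n : ℕ} {D ℓ : ℕ → ℕ} {k : ℕ} (hC : Ctx n D)
    (hℓ : IsDyckPath n ℓ) (hk : k ≤ 2*n) (hmove : liftMove n ℓ k = D) :
    LiftOK n D k ∧ ℓ = lLift D k := by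
  have hv : ∀ j, liftMove n ℓ k j = D j := fun j => congrFun hmove j
  have hm_mem : liftTime n ℓ k ∈ ({j | k < j ∧ j ≤ 2 * n ∧ ℓ j < ℓ k} ∪ {2 * n + 1}) :=
    Nat.sInf_mem ⟨2*n+1, Or.inr rfl⟩
  have hm_le : liftTime n ℓ k ≤ 2*n+1 := Nat.sInf_le (Or.inr rfl)
  set m := liftTime n ℓ k with hm
  have hkm : k < m := by
    rcases hm_mem with ⟨h1, _, _⟩ | h1
    · exact h1
    · have : m = 2*n+1 := h1
      omega
  have hmin : ∀ j, k < j → j ≤ 2*n → j < m → ℓ k ≤ ℓ j := by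
    intro j h1 h2 h3
    by_contra hlt
    have : m ≤ j := Nat.sInf_le (Or.inl ⟨h1, h2, by omega⟩)
    omega
  have hA : ∀ j, j ≤ k → D j = ℓ j := fun j hj => (by rw [← hv j, lm_v1 hj])
  have hB : ∀ j, k < j → j ≤ m → D j = ℓ (j-1) + 1 := fun j h1 h2 =>
    (by rw [← hv j, lm_v2 h1 h2])
  have hCk : ∀ j, m < j → D j = ℓ (j-2) := fun j h1 =>
    (by rw [← hv j, lm_v3 (by omega) h1])
  have hDk : D k = ℓ k := hA k le_rfl
  have hup : D (k+1) = D k + 1 := by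
    have := hB (k+1) (by omega) (by omega)
    rw [show k+1-1 = k by omega] at this
    omega
  -- every j with k < j ≤ m is strictly above D k
  have habove : ∀ j, k < j → j ≤ m → D k < D j := by
    intro j h1 h2
    have hBj := hB j h1 h2
    have hlkj : ℓ k ≤ ℓ (j-1) := by
      rcases Nat.lt_or_ge k (j-1) with hc | hc
      · exact hmin (j-1) hc (by omega) (by omega)
      · have : j - 1 = k := by omega
        rw [this]
    omega
  rcases Nat.lt_or_ge m (2*n+1) with hcase | hcase
  · -- m ≤ 2n, real descent
    have hset : ℓ m < ℓ k := by
      rcases hm_mem with ⟨_, _, h3⟩ | h1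
      · exact h3
      · have : m = 2*n+1 := h1
        omega
    have hstep := hℓ.2.2 (m-1) (by omega)
    rw [show m-1+1 = m by omega] at hstep
    have hlm1 : ℓ k ≤ ℓ (m-1) := by
      rcases Nat.lt_or_ge k (m-1) with hc | hc
      · exact hmin (m-1) hc (by omega) (by omega)
      · have : m - 1 = k := by omega
        rw [this]
    have hkey : ℓ (m-1) = ℓ k ∧ ℓ m + 1 = ℓ k := by omega
    have hDm1 : D (m+1) = ℓ k := by
      rw [hCk (m+1) (by omega), show m+1-2 = m-1 by omega, hkey.1]
    have hDm2 : D (m+2) = ℓ m := by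
      rw [hCk (m+2) (by omega), show m+2-2 = m by omega]
    -- mret D k = m + 1
    have hMmem : mret D k ≤ m+1 := Nat.sInf_le ⟨by omega, by omega⟩
    have hMin : mret D k ∈ {j | k < j ∧ D j ≤ D k} := Nat.sInf_mem ⟨m+1, by omega, by omega⟩
    have hMeq : mret D k = m + 1 := by
      rcases Nat.lt_or_ge (mret D k) (m+1) with hc | hc
      · have := habove (mret D k) hMin.1 (by omega)
        have := hMin.2
        omega
      · omega
    have hOK : LiftOK n D k := by
      refine ⟨hk, hup, Or.inr ?_⟩
      rw [hMeq, show m+1+1 = m+2 by omega, hDm2, hDm1]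
      omega
    refine ⟨hOK, ?_⟩
    funext j
    by_cases h1 : j ≤ k
    · rw [lLift_le h1, hA j h1]
    · by_cases h2 : j + 2 ≤ mret D k
      · rw [lLift_mid (by omega) h2]
        have := hB (j+1) (by omega) (by omega)
        rw [show j+1-1 = j by omega] at this
        omega
      · rw [lLift_hi (by omega) (by omega)]
        have := hCk (j+2) (by omega)
        rw [show j+2-2 = j by omega] at this
        omega
  · -- m = 2n+1, no descent
    have hm1 : m = 2*n+1 := by omega
    have hDm1 : D (2*n+2) = ℓ (2*n) := by
      rw [hCk (2*n+2) (by omega), show 2*n+2-2 = 2*n by omega]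
    have hl2n : ℓ (2*n) = 0 := hℓ.2.1 (2*n) le_rfl
    have hMmem : mret D k ≤ 2*n+2 := mret_le hC (by omega)
    have hMin : mret D k ∈ {j | k < j ∧ D j ≤ D k} :=
      Nat.sInf_mem ⟨2*n+2, by omega, by rw [hDm1, hl2n]; omega⟩
    have hMeq : mret D k = 2*n+2 := by
      rcases Nat.lt_or_ge (mret D k) (2*n+2) with hc | hc
      · have := habove (mret D k) hMin.1 (by omega)
        have := hMin.2
        omega
      · omega
    refine ⟨⟨hk, hup, Or.inl hMeq⟩, ?_⟩
    funext j
    by_cases h1 : j ≤ k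
    · rw [lLift_le h1, hA j h1]
    · by_cases h2 : j + 2 ≤ mret D k
      · rw [lLift_mid (by omega) h2]
        have := hB (j+1) (by omega) (by omega)
        rw [show j+1-1 = j by omega] at this
        omega
      · rw [lLift_hi (by omega) (by omega)]
        have := hCk (j+2) (by omega)
        rw [show j+2-2 = j by omega] at this
        omega


noncomputable instance (n : ℕ) (D : ℕ → ℕ) : DecidablePred (InsOK n D) :=
  fun _ => by unfold InsOK; infer_instance

noncomputable instance (n : ℕ) (D : ℕ → ℕ) : DecidablePred (LiftOK n D) :=
  fun _ => by unfold LiftOK; infer_instance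

noncomputable def insF (n : ℕ) (D : ℕ → ℕ) : Finset ℕ :=
  (Finset.range (2*n+1)).filter (fun k => InsOK n D k)

noncomputable def liftF (n : ℕ) (D : ℕ → ℕ) : Finset ℕ :=
  (Finset.range (2*n+1)).filter (fun k => LiftOK n D k)

noncomputable def downF (n : ℕ) (D : ℕ → ℕ) : Finset ℕ :=
  (Finset.range (2*n+2)).filter (fun d => D (d+1) + 1 = D d)

theorem down_pos {n : ℕ} {D : ℕ → ℕ} (hC : Ctx n D) {d : ℕ} (hd : d ∈ downF n D) :
    1 ≤ d := by
  rcases Finset.mem_filter.1 hd with ⟨_, h2⟩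
  by_contra h
  have : d = 0 := by omega
  subst this
  have := hC.1
  omega

theorem card_downF {n : ℕ} {D : ℕ → ℕ} (hC : Ctx n D) : (downF n D).card = n + 1 := by
  classical
  set upF : Finset ℕ := (Finset.range (2*n+2)).filter (fun d => D (d+1) = D d + 1) with hup
  have hdisj : Disjoint upF (downF n D) := by
    rw [Finset.disjoint_left]
    intro a ha ha'
    rcases Finset.mem_filter.1 ha with ⟨_, h1⟩
    rcases Finset.mem_filter.1 ha' with ⟨_, h2⟩
    omega
  have hunion : upF ∪ downF n D = Finset.range (2*n+2) := by
    ext a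
    simp only [Finset.mem_union, upF, downF, Finset.mem_filter, Finset.mem_range]
    constructor
    · rintro (⟨h, _⟩ | ⟨h, _⟩) <;> exact h
    · intro h
      rcases hC.2.2 a h with h1 | h1
      · exact Or.inl ⟨h, h1⟩
      · exact Or.inr ⟨h, by omega⟩
  have hcards : upF.card + (downF n D).card = 2*n+2 := by
    rw [← Finset.card_union_of_disjoint hdisj, hunion, Finset.card_range]
  have hsum0 : ∑ d ∈ Finset.range (2*n+2), ((D (d+1) : ℤ) - D d) = 0 := by
    rw [Finset.sum_range_sub (fun i => (D i : ℤ))]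
    rw [hC.2.1 _ le_rfl, hC.1]
    simp
  have hsplit : ∑ d ∈ Finset.range (2*n+2), ((D (d+1) : ℤ) - D d)
      = ∑ d ∈ upF, ((D (d+1) : ℤ) - D d) + ∑ d ∈ downF n D, ((D (d+1) : ℤ) - D d) := by
    rw [← Finset.sum_union hdisj, hunion]
  have hsumup : ∑ d ∈ upF, ((D (d+1) : ℤ) - D d) = upF.card := by
    rw [Finset.sum_congr rfl (fun d hd => ?_), Finset.sum_const, nsmul_eq_mul, mul_one]
    rcases Finset.mem_filter.1 hd with ⟨_, h1⟩
    rw [h1]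
    push_cast
    ring
  have hsumdown : ∑ d ∈ downF n D, ((D (d+1) : ℤ) - D d) = -(downF n D).card := by
    rw [Finset.sum_congr rfl (fun d hd => ?_), Finset.sum_const, nsmul_eq_mul, mul_neg_one]
    rcases Finset.mem_filter.1 hd with ⟨_, h1⟩
    rw [← h1]
    push_cast
    ring
  have : (upF.card : ℤ) = (downF n D).card := by omega
  omega

noncomputable def downPU (n : ℕ) (D : ℕ → ℕ) : Finset ℕ :=
  (downF n D).filter (fun d => D d = D (d-1) + 1)

noncomputable def downPD (n : ℕ) (D : ℕ → ℕ) : Finset ℕ :=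
  (downF n D).filter (fun d => D (d-1) = D d + 1)

noncomputable def downDD (n : ℕ) (D : ℕ → ℕ) : Finset ℕ :=
  (downF n D).filter (fun d => d ≠ 2*n+1 ∧ D (d+2) + 1 = D (d+1))

noncomputable def downL (n : ℕ) (D : ℕ → ℕ) : Finset ℕ :=
  (downF n D).filter (fun d => d = 2*n+1 ∨ D (d+2) + 1 = D (d+1))

theorem downF_split {n : ℕ} {D : ℕ → ℕ} (hC : Ctx n D) :
    (downF n D).card = (downPU n D).card + (downPD n D).card := by
  classical
  have hdisj : Disjoint (downPU n D) (downPD n D) := by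
    rw [Finset.disjoint_left]
    intro a ha ha'
    rcases Finset.mem_filter.1 ha with ⟨_, h1⟩
    rcases Finset.mem_filter.1 ha' with ⟨_, h2⟩
    omega
  rw [← Finset.card_union_of_disjoint hdisj]
  congr 1
  ext d
  simp only [downPU, downPD, Finset.mem_union, Finset.mem_filter]
  constructor
  · intro hd
    have h1 : 1 ≤ d := down_pos hC hd
    rcases Finset.mem_filter.1 hd with ⟨hr, hdn⟩
    have hs := hC.2.2 (d-1) (by rw [Finset.mem_range] at hr; omega)
    rw [show d-1+1 = d by omega] at hs
    rcases hs with h | h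
    · exact Or.inl ⟨hd, h⟩
    · exact Or.inr ⟨hd, by omega⟩
  · rintro (⟨h, _⟩ | ⟨h, _⟩) <;> exact h

theorem downL_card {n : ℕ} {D : ℕ → ℕ} (hC : Ctx n D) :
    (downL n D).card = (downDD n D).card + 1 := by
  classical
  have hmem : (2*n+1) ∈ downL n D := by
    have h2 : D (2*n+1+1) = 0 := hC.2.1 _ (by omega)
    have h3 := ctx_top hC
    refine Finset.mem_filter.2 ⟨Finset.mem_filter.2 ⟨Finset.mem_range.2 (by omega), by omega⟩,
      Or.inl rfl⟩
  have herase : (downL n D).erase (2*n+1) = downDD n D := by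
    ext d
    simp only [downL, downDD, Finset.mem_erase, Finset.mem_filter]
    constructor
    · rintro ⟨hne, hdf, (h | h)⟩
      · exact absurd h hne
      · exact ⟨hdf, hne, h⟩
    · rintro ⟨hdf, hne, h⟩
      exact ⟨hne, hdf, Or.inr h⟩
  have := Finset.card_erase_add_one hmem
  rw [herase] at this
  omega

theorem downDD_card {n : ℕ} {D : ℕ → ℕ} (hC : Ctx n D) :
    (downDD n D).card = (downPD n D).card := by
  classical
  refine Finset.card_bij (fun d _ => d + 1) ?_ ?_ ?_
  · intro d hd
    rcases Finset.mem_filter.1 hd with ⟨hdf, hne, hdd⟩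
    rcases Finset.mem_filter.1 hdf with ⟨hr, hdn⟩
    rw [Finset.mem_range] at hr
    refine Finset.mem_filter.2 ⟨Finset.mem_filter.2 ⟨Finset.mem_range.2 (by omega), ?_⟩, ?_⟩
    · rw [show d+1+1 = d+2 by omega]; exact hdd
    · rw [show d+1-1 = d by omega]; omega
  · intro a _ b _ h
    omega
  · intro d hd
    rcases Finset.mem_filter.1 hd with ⟨hdf, hpd⟩
    rcases Finset.mem_filter.1 hdf with ⟨hr, hdn⟩
    rw [Finset.mem_range] at hr
    have h1 : 1 ≤ d := down_pos hC hdf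
    refine ⟨d - 1, ?_, by omega⟩
    refine Finset.mem_filter.2 ⟨Finset.mem_filter.2 ⟨Finset.mem_range.2 (by omega), ?_⟩,
      by omega, ?_⟩
    · rw [show d-1+1 = d by omega]; omega
    · rw [show d-1+2 = d+1 by omega, show d-1+1 = d by omega]; omega

theorem insF_card {n : ℕ} {D : ℕ → ℕ} (hC : Ctx n D) :
    (insF n D).card = (downPU n D).card := by
  classical
  refine Finset.card_bij (fun k _ => k + 1) ?_ ?_ ?_
  · intro k hk
    rcases Finset.mem_filter.1 hk with ⟨hr, hle, hup, hpk⟩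
    rw [Finset.mem_range] at hr
    refine Finset.mem_filter.2 ⟨Finset.mem_filter.2 ⟨Finset.mem_range.2 (by omega), ?_⟩, ?_⟩
    · rw [show k+1+1 = k+2 by omega]; omega
    · rw [show k+1-1 = k by omega]; omega
  · intro a _ b _ h
    omega
  · intro d hd
    rcases Finset.mem_filter.1 hd with ⟨hdf, hpu⟩
    rcases Finset.mem_filter.1 hdf with ⟨hr, hdn⟩
    rw [Finset.mem_range] at hr
    have h1 : 1 ≤ d := down_pos hC hdf
    refine ⟨d - 1, ?_, by omega⟩
    refine Finset.mem_filter.2 ⟨Finset.mem_range.2 (by omega), by omega, ?_, ?_⟩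
    · rw [show d-1+1 = d by omega]; omega
    · rw [show d-1+2 = d+1 by omega]; omega

theorem liftF_card {n : ℕ} {D : ℕ → ℕ} (hC : Ctx n D) :
    (liftF n D).card = (downL n D).card := by
  classical
  have key : ∀ k, LiftOK n D k →
      k + 2 ≤ mret D k ∧ mret D k ≤ 2*n+2 ∧ D (mret D k) = D k ∧
        D (mret D k - 1) = D k + 1 := by
    intro k hk
    have hk1 : k ≤ 2*n := hk.1
    have hg := mret_ge hC hk.1 hk.2.1
    have hle := mret_le hC (k := k) (by omega)
    have heq := mret_eq hC hk.1 hk.2.1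
    exact ⟨hg, hle, heq.1, heq.2⟩
  refine Finset.card_bij (fun k _ => mret D k - 1) ?_ ?_ ?_
  · intro k hk
    rcases Finset.mem_filter.1 hk with ⟨hr, hok⟩
    obtain ⟨hg, hle, he1, he2⟩ := key k hok
    refine Finset.mem_filter.2 ⟨Finset.mem_filter.2 ⟨Finset.mem_range.2 (by omega), ?_⟩, ?_⟩
    · rw [show mret D k - 1 + 1 = mret D k by omega]; omega
    · rcases hok.2.2 with h | h
      · exact Or.inl (by omega)
      · refine Or.inr ?_
        rw [show mret D k - 1 + 2 = mret D k + 1 by omega,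
            show mret D k - 1 + 1 = mret D k by omega]
        exact h
  · intro a ha b hb h
    rcases Finset.mem_filter.1 ha with ⟨hra, hoka⟩
    rcases Finset.mem_filter.1 hb with ⟨hrb, hokb⟩
    obtain ⟨hga, hlea, he1a, he2a⟩ := key a hoka
    obtain ⟨hgb, hleb, he1b, he2b⟩ := key b hokb
    have hmm : mret D a = mret D b := by omega
    rw [hmm] at he1a
    rcases lt_trichotomy a b with hab | hab | hab
    · have h1 : D a < D b := mret_min hab (by omega)
      omega
    · exact hab
    · have h1 : D b < D a := mret_min hab (by omega)
      omega
  · intro d hd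
    rcases Finset.mem_filter.1 hd with ⟨hdf, hcond⟩
    rcases Finset.mem_filter.1 hdf with ⟨hr, hdn⟩
    rw [Finset.mem_range] at hr
    set kk := Nat.findGreatest (fun j => D j ≤ D (d+1)) d with hkk
    have hP0 : D 0 ≤ D (d+1) := by rw [hC.1]; omega
    have hsp : D kk ≤ D (d+1) := Nat.findGreatest_spec (P := fun j => D j ≤ D (d+1)) (Nat.zero_le d) hP0
    have hkkd : kk ≤ d := Nat.findGreatest_le (P := fun j => D j ≤ D (d+1)) d
    have hgt : ∀ j, kk < j → j ≤ d → D (d+1) < D j := by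
      intro j h1 h2
      have := Nat.findGreatest_is_greatest (P := fun j => D j ≤ D (d+1)) h1 h2
      omega
    have hkd : kk < d := by
      rcases Nat.lt_or_ge kk d with h | h
      · exact h
      · have : kk = d := by omega
        rw [this] at hsp
        omega
    have hup : D (kk+1) = D kk + 1 ∧ D kk = D (d+1) := by
      have h1 := hgt (kk+1) (by omega) (by omega)
      have h2 := hC.2.2 kk (by omega)
      omega
    have hMle : mret D kk ≤ d + 1 := Nat.sInf_le ⟨by omega, by omega⟩
    have hMmem : mret D kk ∈ {j | kk < j ∧ D j ≤ D kk} :=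
      Nat.sInf_mem ⟨d+1, by omega, by omega⟩
    have hMeq : mret D kk = d + 1 := by
      rcases Nat.lt_or_ge (mret D kk) (d+1) with hc | hc
      · have := hgt (mret D kk) hMmem.1 (by omega)
        have := hMmem.2
        omega
      · omega
    have hok : LiftOK n D kk := by
      refine ⟨by omega, hup.1, ?_⟩
      rcases hcond with h | h
      · exact Or.inl (by omega)
      · refine Or.inr ?_
        rw [hMeq, show d+1+1 = d+2 by omega]
        exact h
    exact ⟨kk, Finset.mem_filter.2 ⟨Finset.mem_range.2 (by omega), hok⟩, by omega⟩

theorem count_key {n : ℕ} {D : ℕ → ℕ} (hC : Ctx n D) :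
    (insF n D).card + (liftF n D).card = n + 2 := by
  rw [insF_card hC, liftF_card hC, downL_card hC, downDD_card hC]
  have h1 := downF_split hC
  have h2 := card_downF hC
  omega


end NMP

/-- For every `(2n+2)`-step Dyck path `D`, the number of triples
`(ℓ, k, ε)` with `ℓ` a `2n`-step Dyck path, `k ∈ {0, …, 2n}` and `ε ∈ {insert, lift}`
(`true` = insert, `false` = lift) such that applying the move `ε` at position `k` to `ℓ`
yields `D`, is exactly `n + 2`. -/
theorem ncard_move_preimages (n : ℕ) (hn : 0 < n) (D : ℕ → ℕ)
    (hD : IsDyckPath (n + 1) D) :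
    {p : (ℕ → ℕ) × ℕ × Bool |
      IsDyckPath n p.1 ∧ p.2.1 ≤ 2 * n ∧ applyMove n p.1 p.2.1 p.2.2 = D}.ncard
      = n + 2 := by
  classical
  have hC : NMP.Ctx n D :=
    ⟨hD.1, fun j hj => hD.2.1 j (by omega), fun k hk => hD.2.2 k (by omega)⟩
  have hins : ∀ ℓ k, applyMove n ℓ k true = insertMove ℓ k := by
    intro ℓ k; simp [applyMove]
  have hlift : ∀ ℓ k, applyMove n ℓ k false = liftMove n ℓ k := by
    intro ℓ k; simp [applyMove]
  have hset : {p : (ℕ → ℕ) × ℕ × Bool |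
      IsDyckPath n p.1 ∧ p.2.1 ≤ 2 * n ∧ applyMove n p.1 p.2.1 p.2.2 = D}
      = ↑(((NMP.insF n D).image (fun k => (NMP.lIns D k, k, true)) ∪
          (NMP.liftF n D).image (fun k => (NMP.lLift D k, k, false))) :
          Finset ((ℕ → ℕ) × ℕ × Bool)) := by
    ext ⟨ℓ, k, ε⟩
    simp only [Set.mem_setOf_eq, Finset.coe_union, Set.mem_union, Finset.coe_image,
      Set.mem_image, Finset.mem_coe, NMP.insF, NMP.liftF, Finset.mem_filter,
      Finset.mem_range]
    constructor
    · rintro ⟨hdy, hk, hmv⟩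
      cases ε with
      | true =>
        rw [hins] at hmv
        obtain ⟨hok, hleq⟩ := NMP.insert_inv hk hmv
        exact Or.inl ⟨k, ⟨by omega, hok⟩, by rw [hleq]⟩
      | false =>
        rw [hlift] at hmv
        obtain ⟨hok, hleq⟩ := NMP.lift_inv hC hdy hk hmv
        exact Or.inr ⟨k, ⟨by omega, hok⟩, by rw [hleq]⟩
    · rintro (⟨k', ⟨hk', hok⟩, heq⟩ | ⟨k', ⟨hk', hok⟩, heq⟩)
      · rw [Prod.mk.injEq, Prod.mk.injEq] at heq
        obtain ⟨h1, h2, h3⟩ := heq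
        subst h1; subst h2; subst h3
        refine ⟨NMP.lIns_isDyck hC hok, hok.1, ?_⟩
        rw [hins]
        exact NMP.insertMove_lIns hC hok
      · rw [Prod.mk.injEq, Prod.mk.injEq] at heq
        obtain ⟨h1, h2, h3⟩ := heq
        subst h1; subst h2; subst h3
        refine ⟨NMP.lLift_isDyck hC hok, hok.1, ?_⟩
        rw [hlift]
        exact NMP.liftMove_lLift hC hok
  rw [hset, Set.ncard_coe_finset]
  have hdisj : Disjoint ((NMP.insF n D).image (fun k => (NMP.lIns D k, k, true)))
      ((NMP.liftF n D).image (fun k => (NMP.lLift D k, k, false))) := by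
    rw [Finset.disjoint_left]
    rintro ⟨ℓ, k, ε⟩ h1 h2
    rcases Finset.mem_image.1 h1 with ⟨a, _, ha⟩
    rcases Finset.mem_image.1 h2 with ⟨b, _, hb⟩
    rw [Prod.mk.injEq, Prod.mk.injEq] at ha hb
    rcases ha with ⟨_, _, ha3⟩
    rcases hb with ⟨_, _, hb3⟩
    rw [← ha3] at hb3
    simp at hb3
  rw [Finset.card_union_of_disjoint hdisj,
    Finset.card_image_of_injective _ (fun a b h => by simpa using congrArg (fun p => p.2.1) h),
    Finset.card_image_of_injective _ (fun a b h => by simpa using congrArg (fun p => p.2.1) h)]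
  exact NMP.count_key hC
end
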